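/- Let W' be the Coxeter group of type A₃ with simple reflections x, y, z (m(x,y) = m(y,z) = 3, m(x,z) = 2), and H its equal-parameter Hecke algebra. Set b_s := b_y and b_t := b_x b_z = b_{xz}. Then b_s b_t b_s b_t = b_{yxzyxz} + b_{yxyz} + b_{yzyx} + (v + v⁻¹) b_{yxz}, where each b_w on the right is the Kazhdan–Lusztig basis element of the indicated element of W'. -/

import Mathlib

/-!
The Hecke algebra `H(W,S,L)` of a Coxeter system `(W,S)` with weight function `L`
over `ℤ[v,v⁻¹]`, axiomatized as a free `ℤ[v,v⁻¹]`-module with standard basis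
`{H_w}` satisfying the usual multiplication rules (which encode the quadratic
relation `(H_s + v^{L(s)})(H_s - v^{-L(s)}) = 0` and the braid relations),
together with the bar involution.  `T n` denotes `v^n`.
-/

open LaurentPolynomial

noncomputable section

/-- The ground ring `ℤ[v,v⁻¹]`. -/
abbrev Rv : Type := LaurentPolynomial ℤ

/-- The Hecke algebra of a Coxeter system `cs` with weight function `L` (defined on the
simple reflections), presented as a free `ℤ[v,v⁻¹]`-module with basis `{H_w}_{w ∈ W}`,
with `H_1 = 1` and the standard recursive multiplication rule
`H_s H_w = H_{sw}` if `ℓ(sw) > ℓ(w)` and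
`H_s H_w = H_{sw} + (v^{-L(s)} - v^{L(s)}) H_w` if `ℓ(sw) < ℓ(w)`,
together with the bar involution (`v ↦ v⁻¹`, `H_s ↦ H_s + (v^{L(s)} - v^{-L(s)})`). -/
structure HeckeAlgebra {B : Type} {W : Type} [Group W] {M : CoxeterMatrix B}
    (cs : CoxeterSystem M W) (L : B → ℤ) where
  A : Type
  [ringA : Ring A]
  [algA : Algebra Rv A]
  H : W → A
  basisH : Module.Basis W Rv A
  basisH_eq : ∀ w : W, basisH w = H w
  H_one : H 1 = 1
  H_mul_of_lt : ∀ (i : B) (w : W),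
    cs.length w < cs.length (cs.simple i * w) →
    H (cs.simple i) * H w = H (cs.simple i * w)
  H_mul_of_gt : ∀ (i : B) (w : W),
    cs.length (cs.simple i * w) < cs.length w →
    H (cs.simple i) * H w = H (cs.simple i * w) + ((T (-(L i)) - T (L i) : Rv)) • H w
  bar : A →+* A
  bar_bar : ∀ a : A, bar (bar a) = a
  bar_smul : ∀ (c : Rv) (a : A), bar (c • a) = (LaurentPolynomial.invert c) • bar a
  bar_H_simple : ∀ i : B,
    bar (H (cs.simple i)) = H (cs.simple i) + ((T (L i) - T (-(L i)) : Rv)) • 1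

attribute [instance] HeckeAlgebra.ringA HeckeAlgebra.algA

namespace HeckeAlgebra

variable {B : Type} {W : Type} [Group W] {M : CoxeterMatrix B}
  {cs : CoxeterSystem M W} {L : B → ℤ}

/-- The Kazhdan–Lusztig generator `b_s = H_s + v^{L(s)}`. -/
def b (HA : HeckeAlgebra cs L) (i : B) : HA.A :=
  HA.H (cs.simple i) + (T (L i) : Rv) • (1 : HA.A)

/-- `a` is the Kazhdan–Lusztig basis element `b_w`: it is bar-invariant (self-dual), and
it equals `H_w` plus a linear combination of other standard basis elements `H_y` whose
coefficients lie in `v·ℤ[v]` (i.e. all coefficients of `v^n` with `n ≤ 0` vanish). -/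
def IsKL (HA : HeckeAlgebra cs L) (w : W) (a : HA.A) : Prop :=
  HA.bar a = a ∧ HA.basisH.repr a w = 1 ∧
    ∀ y : W, y ≠ w → ∀ n : ℤ, n ≤ 0 → (HA.basisH.repr a y).coeff n = 0

end HeckeAlgebra

namespace HeckeAlgebra

variable {B : Type} {W : Type} [Group W] {M : CoxeterMatrix B}
  {cs : CoxeterSystem M W} {L : B → ℤ} (HA : HeckeAlgebra cs L)

lemma mul_span (i : B) (k : ℕ) {a : HA.A}
    (ha : a ∈ Submodule.span Rv (HA.H '' {u | cs.length u < k})) :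
    HA.H (cs.simple i) * a ∈ Submodule.span Rv (HA.H '' {u | cs.length u < k + 1}) := by
  induction ha using Submodule.span_induction with
  | mem v hv =>
      obtain ⟨u, hu, rfl⟩ := hv
      simp only [Set.mem_setOf_eq] at hu
      have hmem : HA.H (cs.simple i * u) ∈ Submodule.span Rv (HA.H '' {u | cs.length u < k + 1}) := by
        apply Submodule.subset_span
        refine ⟨_, ?_, rfl⟩
        simp only [Set.mem_setOf_eq]
        have := cs.length_mul_le (cs.simple i) u
        have := cs.length_simple i
        omega
      rcases cs.length_simple_mul u i with h | h
      · rw [HA.H_mul_of_lt i u (by omega)]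
        exact hmem
      · rw [HA.H_mul_of_gt i u (by omega)]
        refine Submodule.add_mem _ hmem ?_
        refine Submodule.smul_mem _ _ (Submodule.subset_span ⟨_, ?_, rfl⟩)
        simp only [Set.mem_setOf_eq]; omega
  | zero => simp
  | add v w _ _ hv hw => rw [mul_add]; exact Submodule.add_mem _ hv hw
  | smul c v _ hv => rw [mul_smul_comm]; exact Submodule.smul_mem _ _ hv

lemma bar_H_triangular : ∀ n : ℕ, ∀ w : W, cs.length w = n →
    HA.bar (HA.H w) - HA.H w ∈ Submodule.span Rv (HA.H '' {u | cs.length u < cs.length w}) := by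
  intro n
  induction n using Nat.strong_induction_on with
  | _ n ih =>
    intro w hw
    rcases eq_or_ne w 1 with rfl | hne
    · simp [HA.H_one]
    · obtain ⟨i, hi⟩ := cs.exists_leftDescent_of_ne_one hne
      have hi' : cs.length (cs.simple i * w) < cs.length w := hi
      set u := cs.simple i * w with hu
      have hw' : w = cs.simple i * u := by rw [hu, CoxeterSystem.simple_mul_simple_cancel_left]
      have hlen : cs.length u < cs.length (cs.simple i * u) := by rw [← hw']; exact hi'
      have hmul : HA.H (cs.simple i) * HA.H u = HA.H w := by
        rw [HA.H_mul_of_lt i u hlen, ← hw']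
      obtain hl := ih (cs.length u) (by omega) u rfl
      set l := HA.bar (HA.H u) - HA.H u with hldef
      have hbaru : HA.bar (HA.H u) = HA.H u + l := by rw [hldef]; abel
      have hexp : HA.bar (HA.H w) - HA.H w
          = HA.H (cs.simple i) * l + ((T (L i) - T (-(L i)) : Rv)) • (HA.H u + l) := by
        rw [← hmul, map_mul, HA.bar_H_simple i, hbaru]
        simp only [add_mul, mul_add, smul_mul_assoc, one_mul]
        module
      rw [hexp]
      have hmono : Submodule.span Rv (HA.H '' {u' | cs.length u' < cs.length u + 1})
          ≤ Submodule.span Rv (HA.H '' {u' | cs.length u' < cs.length w}) := by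
        apply Submodule.span_mono
        rintro a ⟨v, hv, rfl⟩
        simp only [Set.mem_setOf_eq] at hv
        exact ⟨v, by simp only [Set.mem_setOf_eq]; omega, rfl⟩
      have h1 := hmono (HA.mul_span i (cs.length u) hl)
      have hu_mem : HA.H u ∈ Submodule.span Rv (HA.H '' {u' | cs.length u' < cs.length w}) :=
        Submodule.subset_span ⟨u, by simp only [Set.mem_setOf_eq]; omega, rfl⟩
      have hl_mem : l ∈ Submodule.span Rv (HA.H '' {u' | cs.length u' < cs.length w}) := by
        apply hmono
        refine Submodule.span_mono ?_ hl
        rintro a ⟨v, hv, rfl⟩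
        simp only [Set.mem_setOf_eq] at hv
        exact ⟨v, by simp only [Set.mem_setOf_eq]; omega, rfl⟩
      exact Submodule.add_mem _ h1 (Submodule.smul_mem _ _ (Submodule.add_mem _ hu_mem hl_mem))

lemma repr_span_eq_zero {k : ℕ} {a : HA.A} (w : W) (hw : k ≤ cs.length w)
    (ha : a ∈ Submodule.span Rv (HA.H '' {u | cs.length u < k})) :
    HA.basisH.repr a w = 0 := by
  induction ha using Submodule.span_induction with
  | mem v hv =>
      obtain ⟨u, hu, rfl⟩ := hv
      simp only [Set.mem_setOf_eq] at hu
      rw [← HA.basisH_eq, Module.Basis.repr_self, Finsupp.single_eq_of_ne']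
      intro h; rw [h] at hu; omega
  | zero => simp
  | add v w' _ _ hv hw' => simp [hv, hw']
  | smul c v _ hv => simp [hv]

lemma eq_zero_of_bar_invariant {d : HA.A} (hbar : HA.bar d = d)
    (hpos : ∀ y : W, ∀ n : ℤ, n ≤ 0 → (HA.basisH.repr d y).coeff n = 0) : d = 0 := by
  by_contra hd
  have hsupp : (HA.basisH.repr d).support.Nonempty := by
    rw [Finsupp.support_nonempty_iff]
    simpa using hd
  obtain ⟨y₀, hy₀, hmax⟩ := (HA.basisH.repr d).support.exists_max_image cs.length hsupp
  have hd_expand : d = ∑ u ∈ (HA.basisH.repr d).support, (HA.basisH.repr d) u • HA.H u := by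
    conv_lhs => rw [← HA.basisH.linearCombination_repr d]
    rw [Finsupp.linearCombination_apply, Finsupp.sum]
    refine Finset.sum_congr rfl fun u _ => ?_
    rw [HA.basisH_eq]
  have key : HA.basisH.repr d y₀ = LaurentPolynomial.invert (HA.basisH.repr d y₀) := by
    conv_lhs => rw [← hbar]
    conv_lhs => rw [hd_expand]
    rw [map_sum]
    have hterm : ∀ u ∈ (HA.basisH.repr d).support, HA.bar ((HA.basisH.repr d) u • HA.H u)
        = LaurentPolynomial.invert ((HA.basisH.repr d) u) • HA.H u
          + LaurentPolynomial.invert ((HA.basisH.repr d) u) • (HA.bar (HA.H u) - HA.H u) := by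
      intro u _
      rw [HA.bar_smul, ← smul_add]
      congr 1
      abel
    have hreprH : ∀ u : W, HA.basisH.repr (HA.H u) = Finsupp.single u (1:Rv) := fun u => by
      rw [← HA.basisH_eq, Module.Basis.repr_self]
    rw [Finset.sum_congr rfl hterm]
    rw [map_sum, Finset.sum_apply']
    rw [Finset.sum_eq_single y₀]
    · rw [map_add, Finsupp.add_apply, map_smul, map_smul, Finsupp.smul_apply, Finsupp.smul_apply]
      rw [HA.repr_span_eq_zero y₀ (le_refl _) (HA.bar_H_triangular (cs.length y₀) y₀ rfl)]
      rw [hreprH, Finsupp.single_eq_same]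
      simp
    · intro u hu hne
      rw [map_add, Finsupp.add_apply, map_smul, map_smul, Finsupp.smul_apply, Finsupp.smul_apply]
      rw [HA.repr_span_eq_zero y₀ (hmax u hu) (HA.bar_H_triangular (cs.length u) u rfl)]
      rw [hreprH, Finsupp.single_eq_of_ne' hne]
      simp
    · intro h; exact absurd hy₀ h
  have hzero : HA.basisH.repr d y₀ = 0 := by
    ext n
    rcases le_or_gt n 0 with hn | hn
    · exact hpos y₀ n hn
    · rw [key, LaurentPolynomial.invert_apply]
      exact hpos y₀ (-n) (by omega)
  exact absurd hzero (Finsupp.mem_support_iff.mp hy₀)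

lemma IsKL_unique {w : W} {a a' : HA.A} (h : HA.IsKL w a) (h' : HA.IsKL w a') : a = a' := by
  obtain ⟨hb, hw, ho⟩ := h
  obtain ⟨hb', hw', ho'⟩ := h'
  have hz : a - a' = 0 := by
    apply HA.eq_zero_of_bar_invariant
    · rw [map_sub, hb, hb']
    · intro u n hn
      rcases eq_or_ne u w with rfl | hne
      · rw [map_sub, Finsupp.sub_apply, hw, hw', sub_self]
        rfl
      · rw [map_sub, Finsupp.sub_apply]
        change ((HA.basisH.repr a) u).coeff n - ((HA.basisH.repr a') u).coeff n = 0
        rw [ho u hne n hn, ho' u hne n hn, sub_zero]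
  exact sub_eq_zero.mp hz

end HeckeAlgebra
/-- Auxiliary: concrete permutation model of `A₃`. -/
def KLgx : Equiv.Perm (Fin 4) := Equiv.swap 0 1
def KLgy : Equiv.Perm (Fin 4) := Equiv.swap 1 2
def KLgz : Equiv.Perm (Fin 4) := Equiv.swap 2 3

/-- Inversion count of a permutation of `Fin 4`. -/
def KLInv (σ : Equiv.Perm (Fin 4)) : ℕ :=
  ((Finset.univ : Finset (Fin 4 × Fin 4)).filter (fun p => p.1 < p.2 ∧ σ p.2 < σ p.1)).card

open scoped Classical in
/-- Map simple generators to adjacent transpositions. -/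
noncomputable def KLfm {B : Type} (x y z : B) : B → Equiv.Perm (Fin 4) :=
  fun i => if i = x then KLgx else if i = y then KLgy else KLgz

example : KLInv (KLgy * (KLgx * KLgz)) = 3 := by decide
example : ∀ σ : Equiv.Perm (Fin 4), KLInv (KLgx * σ) ≤ KLInv σ + 1 := by decide

set_option maxHeartbeats 4000000

/-- Let `W'` be the Coxeter group of type `A₃` with simple reflections
`x, y, z` (`m(x,y) = m(y,z) = 3`, `m(x,z) = 2`), and `H` its equal-parameter Hecke
algebra.  Set `b_s := b_y` and `b_t := b_x b_z = b_{xz}`.  Then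
`b_s b_t b_s b_t = b_{yxzyxz} + b_{yxyz} + b_{yzyx} + (v + v⁻¹) b_{yxz}`,
where each `b_w` on the right is the Kazhdan–Lusztig basis element of the indicated
element of `W'`. -/
theorem A3_B2_folding {B : Type} {W : Type} [Group W] {M : CoxeterMatrix B}
    (cs : CoxeterSystem M W) (x y z : B)
    (hxy : x ≠ y) (hyz : y ≠ z) (hxz : x ≠ z)
    (hmxy : M x y = 3) (hmyz : M y z = 3) (hmxz : M x z = 2)
    (hS : ∀ i : B, i = x ∨ i = y ∨ i = z)
    (HA : HeckeAlgebra cs (fun _ => (1 : ℤ)))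
    (b₀ b₁ b₂ b₃ : HA.A)
    (hb₀ : HA.IsKL
      (cs.simple y * cs.simple x * cs.simple z * cs.simple y * cs.simple x * cs.simple z) b₀)
    (hb₁ : HA.IsKL (cs.simple y * cs.simple x * cs.simple y * cs.simple z) b₁)
    (hb₂ : HA.IsKL (cs.simple y * cs.simple z * cs.simple y * cs.simple x) b₂)
    (hb₃ : HA.IsKL (cs.simple y * cs.simple x * cs.simple z) b₃) :
    HA.b y * (HA.b x * HA.b z) * HA.b y * (HA.b x * HA.b z)
      = b₀ + b₁ + b₂ + ((T 1 + T (-1) : Rv)) • b₃ := by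
  classical
  have fmx : KLfm x y z x = KLgx := by simp [KLfm]
  have fmy : KLfm x y z y = KLgy := by simp [KLfm, Ne.symm hxy]
  have fmz : KLfm x y z z = KLgz := by simp [KLfm, Ne.symm hxz, Ne.symm hyz]
  have hmyx : M y x = 3 := by rw [M.symmetric]; exact hmxy
  have hmzy : M z y = 3 := by rw [M.symmetric]; exact hmyz
  have hmzx : M z x = 2 := by rw [M.symmetric]; exact hmxz
  have hlift : M.IsLiftable (KLfm x y z) := by
    intro i i'
    rcases hS i with rfl | rfl | rfl <;> rcases hS i' with rfl | rfl | rfl <;>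
      simp only [fmx, fmy, fmz, M.diagonal, hmxy, hmyz, hmxz, hmyx, hmzy, hmzx] <;> decide
  let piW : W →* Equiv.Perm (Fin 4) := cs.lift ⟨KLfm x y z, hlift⟩
  have pi_simple : ∀ i : B, piW (cs.simple i) = KLfm x y z i := fun i =>
    cs.lift_apply_simple hlift i
  have pi_word : ∀ ω : List B, piW (cs.wordProd ω) = ((ω.map (KLfm x y z)).prod) := by
    intro ω
    induction ω with
    | nil => simp [CoxeterSystem.wordProd_nil]
    | cons i ω ih =>
        rw [CoxeterSystem.wordProd_cons, map_mul, pi_simple, List.map_cons, List.prod_cons, ih]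
  have invstep : ∀ (i : B) (σ : Equiv.Perm (Fin 4)),
      KLInv (KLfm x y z i * σ) ≤ KLInv σ + 1 := by
    intro i σ
    rcases hS i with rfl | rfl | rfl
    · rw [fmx]; revert σ; decide
    · rw [fmy]; revert σ; decide
    · rw [fmz]; revert σ; decide
  have invle : ∀ ω : List B, KLInv ((ω.map (KLfm x y z)).prod) ≤ ω.length := by
    intro ω
    induction ω with
    | nil => simp [List.map_nil, List.prod_nil]; decide
    | cons i ω ih =>
        rw [List.map_cons, List.prod_cons]
        calc KLInv (KLfm x y z i * (ω.map (KLfm x y z)).prod)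
            ≤ KLInv ((ω.map (KLfm x y z)).prod) + 1 := invstep i _
          _ ≤ ω.length + 1 := by omega
  have lenw : ∀ (ω : List B) (m : List (Equiv.Perm (Fin 4))) (n : ℕ),
      ω.map (KLfm x y z) = m → ω.length = n → KLInv m.prod = n →
      cs.length (cs.wordProd ω) = n := by
    intro ω m n hm hn hinv
    subst hn
    refine le_antisymm (cs.length_wordProd_le ω) ?_
    obtain ⟨ω₂, hl, hw⟩ := cs.exists_reduced_word (cs.wordProd ω)
    replace hl : cs.length (cs.wordProd ω) = ω₂.length := by rw [hw]; exact hl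
    have h1 : KLInv (piW (cs.wordProd ω)) = ω.length := by rw [pi_word, hm]; exact hinv
    have h2 : KLInv (piW (cs.wordProd ω)) ≤ ω₂.length := by
      rw [hw, pi_word]; exact invle ω₂
    omega
  have neW : ∀ (ω ω' : List B) (m m' : List (Equiv.Perm (Fin 4))),
      ω.map (KLfm x y z) = m → ω'.map (KLfm x y z) = m' → m.prod ≠ m'.prod →
      cs.wordProd ω ≠ cs.wordProd ω' := by
    intro ω ω' m m' hm hm' hne he
    exact hne (by rw [← hm, ← hm', ← pi_word, ← pi_word, he])
  have mulLT : ∀ (i : B) (ω ω' : List B), cs.simple i * cs.wordProd ω = cs.wordProd ω' →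
      cs.length (cs.wordProd ω) = ω.length → cs.length (cs.wordProd ω') = ω'.length →
      ω'.length = ω.length + 1 →
      HA.H (cs.simple i) * HA.H (cs.wordProd ω) = HA.H (cs.wordProd ω') := by
    intro i ω ω' hg h1 h2 h3
    rw [HA.H_mul_of_lt i _ (by rw [hg, h1, h2]; omega), hg]
  have mulGT : ∀ (i : B) (ω ω' : List B), cs.simple i * cs.wordProd ω = cs.wordProd ω' →
      cs.length (cs.wordProd ω) = ω.length → cs.length (cs.wordProd ω') = ω'.length →
      ω.length = ω'.length + 1 →
      HA.H (cs.simple i) * HA.H (cs.wordProd ω)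
        = HA.H (cs.wordProd ω') + ((T (-1) - T 1 : Rv)) • HA.H (cs.wordProd ω) := by
    intro i ω ω' hg h1 h2 h3
    rw [HA.H_mul_of_gt i _ (by rw [hg, h1, h2]; omega), hg]
  have gcomm : cs.simple z * cs.simple x = cs.simple x * cs.simple z := by
    have h := cs.simple_mul_simple_pow x z
    rw [hmxz, pow_two] at h
    have h2 : cs.simple x * cs.simple z = (cs.simple x * cs.simple z)⁻¹ :=
      eq_inv_of_mul_eq_one_left h
    rw [h2, mul_inv_rev]
    simp
  have gbraidxy : cs.simple x * (cs.simple y * cs.simple x)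
      = cs.simple y * (cs.simple x * cs.simple y) := by
    have h := cs.simple_mul_simple_pow x y
    rw [hmxy, pow_succ, pow_two] at h
    have h2 : (cs.simple x * cs.simple y) * cs.simple x
        = (cs.simple y * (cs.simple x * cs.simple y))⁻¹ := by
      apply eq_inv_of_mul_eq_one_left
      simpa only [mul_assoc] using h
    simpa only [mul_inv_rev, cs.inv_simple, mul_assoc] using h2
  have gbraidzy : cs.simple z * (cs.simple y * cs.simple z)
      = cs.simple y * (cs.simple z * cs.simple y) := by
    have h := cs.simple_mul_simple_pow z y
    rw [hmzy, pow_succ, pow_two] at h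
    have h2 : (cs.simple z * cs.simple y) * cs.simple z
        = (cs.simple y * (cs.simple z * cs.simple y))⁻¹ := by
      apply eq_inv_of_mul_eq_one_left
      simpa only [mul_assoc] using h
    simpa only [mul_inv_rev, cs.inv_simple, mul_assoc] using h2
  have gbraidxyz : cs.simple x * (cs.simple y * (cs.simple x * cs.simple z))
      = cs.simple y * (cs.simple x * (cs.simple y * cs.simple z)) := by
    have h := congrArg (· * cs.simple z) gbraidxy
    simpa only [mul_assoc] using h
  have gidzyxz : cs.simple z * (cs.simple y * (cs.simple x * cs.simple z))
      = cs.simple y * (cs.simple z * (cs.simple y * cs.simple x)) := by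
    calc cs.simple z * (cs.simple y * (cs.simple x * cs.simple z))
        = cs.simple z * (cs.simple y * (cs.simple z * cs.simple x)) := by rw [← gcomm]
      _ = (cs.simple z * (cs.simple y * cs.simple z)) * cs.simple x := by
          simp only [mul_assoc]
      _ = (cs.simple y * (cs.simple z * cs.simple y)) * cs.simple x := by rw [gbraidzy]
      _ = cs.simple y * (cs.simple z * (cs.simple y * cs.simple x)) := by
          simp only [mul_assoc]
  have hb : ∀ i : B, HA.b i = HA.H (cs.simple i) + (T 1 : Rv) • (1 : HA.A) := fun i => rfl
  have hH1 : (1 : HA.A) = HA.H (cs.wordProd []) := by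
    rw [CoxeterSystem.wordProd_nil, HA.H_one]
  have hHx : HA.H (cs.simple x) = HA.H (cs.wordProd [x]) := by
    rw [CoxeterSystem.wordProd_cons, CoxeterSystem.wordProd_nil, mul_one]
  have hHy : HA.H (cs.simple y) = HA.H (cs.wordProd [y]) := by
    rw [CoxeterSystem.wordProd_cons, CoxeterSystem.wordProd_nil, mul_one]
  have hHz : HA.H (cs.simple z) = HA.H (cs.wordProd [z]) := by
    rw [CoxeterSystem.wordProd_cons, CoxeterSystem.wordProd_nil, mul_one]
  have hreprH : ∀ u : W, HA.basisH.repr (HA.H u) = Finsupp.single u (1:Rv) := fun u => by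
    rw [← HA.basisH_eq, Module.Basis.repr_self]
  have addap : ∀ (a b : Rv) (n : ℤ), (a + b).coeff n = a.coeff n + b.coeff n := fun a b n => rfl
  have hvan : ∀ (k : ℤ) (u v : W) (n : ℤ), n < k →
      ((T k : Rv) • (HA.basisH.repr (HA.H u)) v).coeff n = 0 := by
    intro k u v n hn
    rw [hreprH]
    by_cases huv : u = v
    · subst huv
      rw [Finsupp.single_eq_same, smul_eq_mul, mul_one]
      have hT : (T k : Rv).coeff n = if k = n then 1 else 0 := T_apply n k
      rw [hT, if_neg (by omega)]
    · rw [Finsupp.single_eq_of_ne' huv, smul_eq_mul, mul_zero]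
      simp
  have hbarb : ∀ i : B, HA.bar (HA.b i) = HA.b i := by
    intro i
    rw [hb i, map_add, HA.bar_H_simple i, HA.bar_smul, map_one, LaurentPolynomial.invert_T]
    module
  have len_z : cs.length (cs.wordProd [z]) = 1 :=
    lenw [z] [KLgz] 1 (by simp [fmz]) rfl (by decide)
  have len_yz : cs.length (cs.wordProd [y,z]) = 2 :=
    lenw [y,z] [KLgy,KLgz] 2 (by simp [fmy,fmz]) rfl (by decide)
  have mul_y_z := mulLT y [z] [y,z] (cs.wordProd_cons y [z]).symm len_z len_yz rfl
  have len_nil : cs.length (cs.wordProd []) = 0 :=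
    lenw [] [] 0 (by simp) rfl (by decide)
  have len_y : cs.length (cs.wordProd [y]) = 1 :=
    lenw [y] [KLgy] 1 (by simp [fmy]) rfl (by decide)
  have mul_y_nil := mulLT y [] [y] (cs.wordProd_cons y []).symm len_nil len_y rfl
  have StU1 : HA.b y * (HA.b z) = HA.H (cs.wordProd [y,z])
      + (T 1 : Rv) • HA.H (cs.wordProd [y])
      + (T 1 : Rv) • HA.H (cs.wordProd [z])
      + (T 2 : Rv) • HA.H (cs.wordProd []) := by
    rw [hb y, hb z]
    simp only [add_mul, mul_add, smul_mul_assoc, mul_smul_comm, smul_smul, one_mul]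
    rw [hHz, hH1]
    rw [mul_y_z, mul_y_nil]
    match_scalars <;> (simp only [mul_sub, sub_mul, mul_add, add_mul, one_mul, mul_one, ← T_add]; try norm_num [T_zero]; try ring1)
  have len_xyz : cs.length (cs.wordProd [x,y,z]) = 3 :=
    lenw [x,y,z] [KLgx,KLgy,KLgz] 3 (by simp [fmx,fmy,fmz]) rfl (by decide)
  have mul_x_yz := mulLT x [y,z] [x,y,z] (cs.wordProd_cons x [y,z]).symm len_yz len_xyz rfl
  have len_xy : cs.length (cs.wordProd [x,y]) = 2 :=
    lenw [x,y] [KLgx,KLgy] 2 (by simp [fmx,fmy]) rfl (by decide)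
  have mul_x_y := mulLT x [y] [x,y] (cs.wordProd_cons x [y]).symm len_y len_xy rfl
  have len_xz : cs.length (cs.wordProd [x,z]) = 2 :=
    lenw [x,z] [KLgx,KLgz] 2 (by simp [fmx,fmz]) rfl (by decide)
  have mul_x_z := mulLT x [z] [x,z] (cs.wordProd_cons x [z]).symm len_z len_xz rfl
  have len_x : cs.length (cs.wordProd [x]) = 1 :=
    lenw [x] [KLgx] 1 (by simp [fmx]) rfl (by decide)
  have mul_x_nil := mulLT x [] [x] (cs.wordProd_cons x []).symm len_nil len_x rfl
  have StU2 : HA.b x * (HA.b y * (HA.b z)) = HA.H (cs.wordProd [x,y,z])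
      + (T 1 : Rv) • HA.H (cs.wordProd [x,y])
      + (T 1 : Rv) • HA.H (cs.wordProd [x,z])
      + (T 1 : Rv) • HA.H (cs.wordProd [y,z])
      + (T 2 : Rv) • HA.H (cs.wordProd [x])
      + (T 2 : Rv) • HA.H (cs.wordProd [y])
      + (T 2 : Rv) • HA.H (cs.wordProd [z])
      + (T 3 : Rv) • HA.H (cs.wordProd []) := by
    rw [StU1, hb x]
    simp only [add_mul, mul_add, smul_mul_assoc, mul_smul_comm, smul_smul, one_mul, mul_one]
    rw [mul_x_yz, mul_x_y, mul_x_z, mul_x_nil]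
    match_scalars <;> (simp only [mul_sub, sub_mul, mul_add, add_mul, one_mul, mul_one, ← T_add]; try norm_num [T_zero]; try ring1)
  have len_yxyz : cs.length (cs.wordProd [y,x,y,z]) = 4 :=
    lenw [y,x,y,z] [KLgy,KLgx,KLgy,KLgz] 4 (by simp [fmx,fmy,fmz]) rfl (by decide)
  have mul_y_xyz := mulLT y [x,y,z] [y,x,y,z] (cs.wordProd_cons y [x,y,z]).symm len_xyz len_yxyz rfl
  have len_yxy : cs.length (cs.wordProd [y,x,y]) = 3 :=
    lenw [y,x,y] [KLgy,KLgx,KLgy] 3 (by simp [fmx,fmy]) rfl (by decide)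
  have mul_y_xy := mulLT y [x,y] [y,x,y] (cs.wordProd_cons y [x,y]).symm len_xy len_yxy rfl
  have len_yxz : cs.length (cs.wordProd [y,x,z]) = 3 :=
    lenw [y,x,z] [KLgy,KLgx,KLgz] 3 (by simp [fmx,fmy,fmz]) rfl (by decide)
  have mul_y_xz := mulLT y [x,z] [y,x,z] (cs.wordProd_cons y [x,z]).symm len_xz len_yxz rfl
  have mul_y_yz := mulGT y [y,z] [z] (by rw [CoxeterSystem.wordProd_cons, cs.simple_mul_simple_cancel_left]) len_yz len_z rfl
  have len_yx : cs.length (cs.wordProd [y,x]) = 2 :=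
    lenw [y,x] [KLgy,KLgx] 2 (by simp [fmx,fmy]) rfl (by decide)
  have mul_y_x := mulLT y [x] [y,x] (cs.wordProd_cons y [x]).symm len_x len_yx rfl
  have mul_y_y := mulGT y [y] [] (by rw [CoxeterSystem.wordProd_cons, cs.simple_mul_simple_cancel_left]) len_y len_nil rfl
  have StU3 : HA.b y * (HA.b x * (HA.b y * (HA.b z))) = HA.H (cs.wordProd [y,x,y,z])
      + (T 1 : Rv) • HA.H (cs.wordProd [x,y,z])
      + (T 1 : Rv) • HA.H (cs.wordProd [y,x,y])
      + (T 1 : Rv) • HA.H (cs.wordProd [y,x,z])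
      + (T 2 : Rv) • HA.H (cs.wordProd [x,y])
      + (T 2 : Rv) • HA.H (cs.wordProd [x,z])
      + (T 2 : Rv) • HA.H (cs.wordProd [y,x])
      + (T 0 + T 2 : Rv) • HA.H (cs.wordProd [y,z])
      + (T 3 : Rv) • HA.H (cs.wordProd [x])
      + (T 1 + T 3 : Rv) • HA.H (cs.wordProd [y])
      + (T 1 + T 3 : Rv) • HA.H (cs.wordProd [z])
      + (T 2 + T 4 : Rv) • HA.H (cs.wordProd []) := by
    rw [StU2, hb y]
    simp only [add_mul, mul_add, smul_mul_assoc, mul_smul_comm, smul_smul, one_mul, mul_one]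
    rw [mul_y_xyz, mul_y_xy, mul_y_xz, mul_y_yz, mul_y_x, mul_y_y, mul_y_z, mul_y_nil]
    match_scalars <;> (simp only [mul_sub, sub_mul, mul_add, add_mul, one_mul, mul_one, ← T_add]; try norm_num [T_zero]; try ring1)
  have StV1 : HA.b y * (HA.b x) = HA.H (cs.wordProd [y,x])
      + (T 1 : Rv) • HA.H (cs.wordProd [x])
      + (T 1 : Rv) • HA.H (cs.wordProd [y])
      + (T 2 : Rv) • HA.H (cs.wordProd []) := by
    rw [hb y, hb x]
    simp only [add_mul, mul_add, smul_mul_assoc, mul_smul_comm, smul_smul, one_mul]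
    rw [hHx, hH1]
    rw [mul_y_x, mul_y_nil]
    match_scalars <;> (simp only [mul_sub, sub_mul, mul_add, add_mul, one_mul, mul_one, ← T_add]; try norm_num [T_zero]; try ring1)
  have len_zyx : cs.length (cs.wordProd [z,y,x]) = 3 :=
    lenw [z,y,x] [KLgz,KLgy,KLgx] 3 (by simp [fmx,fmy,fmz]) rfl (by decide)
  have mul_z_yx := mulLT z [y,x] [z,y,x] (cs.wordProd_cons z [y,x]).symm len_yx len_zyx rfl
  have mul_z_x := mulLT z [x] [x,z] (by simp only [CoxeterSystem.wordProd_cons, CoxeterSystem.wordProd_nil, mul_one]; exact gcomm) len_x len_xz rfl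
  have len_zy : cs.length (cs.wordProd [z,y]) = 2 :=
    lenw [z,y] [KLgz,KLgy] 2 (by simp [fmy,fmz]) rfl (by decide)
  have mul_z_y := mulLT z [y] [z,y] (cs.wordProd_cons z [y]).symm len_y len_zy rfl
  have mul_z_nil := mulLT z [] [z] (cs.wordProd_cons z []).symm len_nil len_z rfl
  have StV2 : HA.b z * (HA.b y * (HA.b x)) = HA.H (cs.wordProd [z,y,x])
      + (T 1 : Rv) • HA.H (cs.wordProd [x,z])
      + (T 1 : Rv) • HA.H (cs.wordProd [y,x])
      + (T 1 : Rv) • HA.H (cs.wordProd [z,y])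
      + (T 2 : Rv) • HA.H (cs.wordProd [x])
      + (T 2 : Rv) • HA.H (cs.wordProd [y])
      + (T 2 : Rv) • HA.H (cs.wordProd [z])
      + (T 3 : Rv) • HA.H (cs.wordProd []) := by
    rw [StV1, hb z]
    simp only [add_mul, mul_add, smul_mul_assoc, mul_smul_comm, smul_smul, one_mul, mul_one]
    rw [mul_z_yx, mul_z_x, mul_z_y, mul_z_nil]
    match_scalars <;> (simp only [mul_sub, sub_mul, mul_add, add_mul, one_mul, mul_one, ← T_add]; try norm_num [T_zero]; try ring1)
  have len_yzyx : cs.length (cs.wordProd [y,z,y,x]) = 4 :=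
    lenw [y,z,y,x] [KLgy,KLgz,KLgy,KLgx] 4 (by simp [fmx,fmy,fmz]) rfl (by decide)
  have mul_y_zyx := mulLT y [z,y,x] [y,z,y,x] (cs.wordProd_cons y [z,y,x]).symm len_zyx len_yzyx rfl
  have mul_y_yx := mulGT y [y,x] [x] (by rw [CoxeterSystem.wordProd_cons, cs.simple_mul_simple_cancel_left]) len_yx len_x rfl
  have len_yzy : cs.length (cs.wordProd [y,z,y]) = 3 :=
    lenw [y,z,y] [KLgy,KLgz,KLgy] 3 (by simp [fmy,fmz]) rfl (by decide)
  have mul_y_zy := mulLT y [z,y] [y,z,y] (cs.wordProd_cons y [z,y]).symm len_zy len_yzy rfl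
  have StV3 : HA.b y * (HA.b z * (HA.b y * (HA.b x))) = HA.H (cs.wordProd [y,z,y,x])
      + (T 1 : Rv) • HA.H (cs.wordProd [y,x,z])
      + (T 1 : Rv) • HA.H (cs.wordProd [y,z,y])
      + (T 1 : Rv) • HA.H (cs.wordProd [z,y,x])
      + (T 2 : Rv) • HA.H (cs.wordProd [x,z])
      + (T 0 + T 2 : Rv) • HA.H (cs.wordProd [y,x])
      + (T 2 : Rv) • HA.H (cs.wordProd [y,z])
      + (T 2 : Rv) • HA.H (cs.wordProd [z,y])
      + (T 1 + T 3 : Rv) • HA.H (cs.wordProd [x])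
      + (T 1 + T 3 : Rv) • HA.H (cs.wordProd [y])
      + (T 3 : Rv) • HA.H (cs.wordProd [z])
      + (T 2 + T 4 : Rv) • HA.H (cs.wordProd []) := by
    rw [StV2, hb y]
    simp only [add_mul, mul_add, smul_mul_assoc, mul_smul_comm, smul_smul, one_mul, mul_one]
    rw [mul_y_zyx, mul_y_xz, mul_y_yx, mul_y_zy, mul_y_x, mul_y_y, mul_y_z, mul_y_nil]
    match_scalars <;> (simp only [mul_sub, sub_mul, mul_add, add_mul, one_mul, mul_one, ← T_add]; try norm_num [T_zero]; try ring1)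
  have StS1 : HA.b x * (HA.b z) = HA.H (cs.wordProd [x,z])
      + (T 1 : Rv) • HA.H (cs.wordProd [x])
      + (T 1 : Rv) • HA.H (cs.wordProd [z])
      + (T 2 : Rv) • HA.H (cs.wordProd []) := by
    rw [hb x, hb z]
    simp only [add_mul, mul_add, smul_mul_assoc, mul_smul_comm, smul_smul, one_mul]
    rw [hHz, hH1]
    rw [mul_x_z, mul_x_nil]
    match_scalars <;> (simp only [mul_sub, sub_mul, mul_add, add_mul, one_mul, mul_one, ← T_add]; try norm_num [T_zero]; try ring1)
  have StS2 : HA.b y * (HA.b x * (HA.b z)) = HA.H (cs.wordProd [y,x,z])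
      + (T 1 : Rv) • HA.H (cs.wordProd [x,z])
      + (T 1 : Rv) • HA.H (cs.wordProd [y,x])
      + (T 1 : Rv) • HA.H (cs.wordProd [y,z])
      + (T 2 : Rv) • HA.H (cs.wordProd [x])
      + (T 2 : Rv) • HA.H (cs.wordProd [y])
      + (T 2 : Rv) • HA.H (cs.wordProd [z])
      + (T 3 : Rv) • HA.H (cs.wordProd []) := by
    rw [StS1, hb y]
    simp only [add_mul, mul_add, smul_mul_assoc, mul_smul_comm, smul_smul, one_mul, mul_one]
    rw [mul_y_xz, mul_y_x, mul_y_z, mul_y_nil]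
    match_scalars <;> (simp only [mul_sub, sub_mul, mul_add, add_mul, one_mul, mul_one, ← T_add]; try norm_num [T_zero]; try ring1)
  have mul_z_yxz := mulLT z [y,x,z] [y,z,y,x] (by simp only [CoxeterSystem.wordProd_cons, CoxeterSystem.wordProd_nil, mul_one]; exact gidzyxz) len_yxz len_yzyx rfl
  have mul_z_xz := mulGT z [x,z] [x] (by simp only [CoxeterSystem.wordProd_cons, CoxeterSystem.wordProd_nil, mul_one]; rw [← mul_assoc, gcomm, mul_assoc, cs.simple_mul_simple_self, mul_one]) len_xz len_x rfl
  have mul_z_yz := mulLT z [y,z] [y,z,y] (by simp only [CoxeterSystem.wordProd_cons, CoxeterSystem.wordProd_nil, mul_one]; exact gbraidzy) len_yz len_yzy rfl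
  have mul_z_z := mulGT z [z] [] (by rw [CoxeterSystem.wordProd_cons, cs.simple_mul_simple_cancel_left]) len_z len_nil rfl
  have StS3 : HA.b z * (HA.b y * (HA.b x * (HA.b z))) = HA.H (cs.wordProd [y,z,y,x])
      + (T 1 : Rv) • HA.H (cs.wordProd [y,x,z])
      + (T 1 : Rv) • HA.H (cs.wordProd [y,z,y])
      + (T 1 : Rv) • HA.H (cs.wordProd [z,y,x])
      + (T 0 + T 2 : Rv) • HA.H (cs.wordProd [x,z])
      + (T 2 : Rv) • HA.H (cs.wordProd [y,x])
      + (T 2 : Rv) • HA.H (cs.wordProd [y,z])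
      + (T 2 : Rv) • HA.H (cs.wordProd [z,y])
      + (T 1 + T 3 : Rv) • HA.H (cs.wordProd [x])
      + (T 3 : Rv) • HA.H (cs.wordProd [y])
      + (T 1 + T 3 : Rv) • HA.H (cs.wordProd [z])
      + (T 2 + T 4 : Rv) • HA.H (cs.wordProd []) := by
    rw [StS2, hb z]
    simp only [add_mul, mul_add, smul_mul_assoc, mul_smul_comm, smul_smul, one_mul, mul_one]
    rw [mul_z_yxz, mul_z_xz, mul_z_yx, mul_z_yz, mul_z_x, mul_z_y, mul_z_z, mul_z_nil]
    match_scalars <;> (simp only [mul_sub, sub_mul, mul_add, add_mul, one_mul, mul_one, ← T_add]; try norm_num [T_zero]; try ring1)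
  have len_xyzyx : cs.length (cs.wordProd [x,y,z,y,x]) = 5 :=
    lenw [x,y,z,y,x] [KLgx,KLgy,KLgz,KLgy,KLgx] 5 (by simp [fmx,fmy,fmz]) rfl (by decide)
  have mul_x_yzyx := mulLT x [y,z,y,x] [x,y,z,y,x] (cs.wordProd_cons x [y,z,y,x]).symm len_yzyx len_xyzyx rfl
  have mul_x_yxz := mulLT x [y,x,z] [y,x,y,z] (by simp only [CoxeterSystem.wordProd_cons, CoxeterSystem.wordProd_nil, mul_one]; exact gbraidxyz) len_yxz len_yxyz rfl
  have len_xyzy : cs.length (cs.wordProd [x,y,z,y]) = 4 :=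
    lenw [x,y,z,y] [KLgx,KLgy,KLgz,KLgy] 4 (by simp [fmx,fmy,fmz]) rfl (by decide)
  have mul_x_yzy := mulLT x [y,z,y] [x,y,z,y] (cs.wordProd_cons x [y,z,y]).symm len_yzy len_xyzy rfl
  have len_xzyx : cs.length (cs.wordProd [x,z,y,x]) = 4 :=
    lenw [x,z,y,x] [KLgx,KLgz,KLgy,KLgx] 4 (by simp [fmx,fmy,fmz]) rfl (by decide)
  have mul_x_zyx := mulLT x [z,y,x] [x,z,y,x] (cs.wordProd_cons x [z,y,x]).symm len_zyx len_xzyx rfl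
  have mul_x_xz := mulGT x [x,z] [z] (by rw [CoxeterSystem.wordProd_cons, cs.simple_mul_simple_cancel_left]) len_xz len_z rfl
  have mul_x_yx := mulLT x [y,x] [y,x,y] (by simp only [CoxeterSystem.wordProd_cons, CoxeterSystem.wordProd_nil, mul_one]; exact gbraidxy) len_yx len_yxy rfl
  have len_xzy : cs.length (cs.wordProd [x,z,y]) = 3 :=
    lenw [x,z,y] [KLgx,KLgz,KLgy] 3 (by simp [fmx,fmy,fmz]) rfl (by decide)
  have mul_x_zy := mulLT x [z,y] [x,z,y] (cs.wordProd_cons x [z,y]).symm len_zy len_xzy rfl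
  have mul_x_x := mulGT x [x] [] (by rw [CoxeterSystem.wordProd_cons, cs.simple_mul_simple_cancel_left]) len_x len_nil rfl
  have StS4 : HA.b x * (HA.b z * (HA.b y * (HA.b x * (HA.b z)))) = HA.H (cs.wordProd [x,y,z,y,x])
      + (T 1 : Rv) • HA.H (cs.wordProd [x,y,z,y])
      + (T 1 : Rv) • HA.H (cs.wordProd [x,z,y,x])
      + (T 1 : Rv) • HA.H (cs.wordProd [y,x,y,z])
      + (T 1 : Rv) • HA.H (cs.wordProd [y,z,y,x])
      + (T 2 : Rv) • HA.H (cs.wordProd [x,y,z])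
      + (T 2 : Rv) • HA.H (cs.wordProd [x,z,y])
      + (T 2 : Rv) • HA.H (cs.wordProd [y,x,y])
      + (T 2 : Rv) • HA.H (cs.wordProd [y,x,z])
      + (T 2 : Rv) • HA.H (cs.wordProd [y,z,y])
      + (T 2 : Rv) • HA.H (cs.wordProd [z,y,x])
      + (T 3 : Rv) • HA.H (cs.wordProd [x,y])
      + (T (-1) + (2 : Rv) * T 1 + T 3 : Rv) • HA.H (cs.wordProd [x,z])
      + (T 3 : Rv) • HA.H (cs.wordProd [y,x])
      + (T 3 : Rv) • HA.H (cs.wordProd [y,z])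
      + (T 3 : Rv) • HA.H (cs.wordProd [z,y])
      + (T 0 + (2 : Rv) * T 2 + T 4 : Rv) • HA.H (cs.wordProd [x])
      + (T 4 : Rv) • HA.H (cs.wordProd [y])
      + (T 0 + (2 : Rv) * T 2 + T 4 : Rv) • HA.H (cs.wordProd [z])
      + (T 1 + (2 : Rv) * T 3 + T 5 : Rv) • HA.H (cs.wordProd []) := by
    rw [StS3, hb x]
    simp only [add_mul, mul_add, smul_mul_assoc, mul_smul_comm, smul_smul, one_mul, mul_one]
    rw [mul_x_yzyx, mul_x_yxz, mul_x_yzy, mul_x_zyx, mul_x_xz, mul_x_yx, mul_x_yz, mul_x_zy, mul_x_x, mul_x_y, mul_x_z, mul_x_nil]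
    match_scalars <;> (simp only [mul_sub, sub_mul, mul_add, add_mul, one_mul, mul_one, ← T_add]; try norm_num [T_zero]; try ring1)
  have len_yxyzyx : cs.length (cs.wordProd [y,x,y,z,y,x]) = 6 :=
    lenw [y,x,y,z,y,x] [KLgy,KLgx,KLgy,KLgz,KLgy,KLgx] 6 (by simp [fmx,fmy,fmz]) rfl (by decide)
  have mul_y_xyzyx := mulLT y [x,y,z,y,x] [y,x,y,z,y,x] (cs.wordProd_cons y [x,y,z,y,x]).symm len_xyzyx len_yxyzyx rfl
  have len_yxyzy : cs.length (cs.wordProd [y,x,y,z,y]) = 5 :=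
    lenw [y,x,y,z,y] [KLgy,KLgx,KLgy,KLgz,KLgy] 5 (by simp [fmx,fmy,fmz]) rfl (by decide)
  have mul_y_xyzy := mulLT y [x,y,z,y] [y,x,y,z,y] (cs.wordProd_cons y [x,y,z,y]).symm len_xyzy len_yxyzy rfl
  have len_yxzyx : cs.length (cs.wordProd [y,x,z,y,x]) = 5 :=
    lenw [y,x,z,y,x] [KLgy,KLgx,KLgz,KLgy,KLgx] 5 (by simp [fmx,fmy,fmz]) rfl (by decide)
  have mul_y_xzyx := mulLT y [x,z,y,x] [y,x,z,y,x] (cs.wordProd_cons y [x,z,y,x]).symm len_xzyx len_yxzyx rfl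
  have mul_y_yxyz := mulGT y [y,x,y,z] [x,y,z] (by rw [CoxeterSystem.wordProd_cons, cs.simple_mul_simple_cancel_left]) len_yxyz len_xyz rfl
  have mul_y_yzyx := mulGT y [y,z,y,x] [z,y,x] (by rw [CoxeterSystem.wordProd_cons, cs.simple_mul_simple_cancel_left]) len_yzyx len_zyx rfl
  have len_yxzy : cs.length (cs.wordProd [y,x,z,y]) = 4 :=
    lenw [y,x,z,y] [KLgy,KLgx,KLgz,KLgy] 4 (by simp [fmx,fmy,fmz]) rfl (by decide)
  have mul_y_xzy := mulLT y [x,z,y] [y,x,z,y] (cs.wordProd_cons y [x,z,y]).symm len_xzy len_yxzy rfl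
  have mul_y_yxy := mulGT y [y,x,y] [x,y] (by rw [CoxeterSystem.wordProd_cons, cs.simple_mul_simple_cancel_left]) len_yxy len_xy rfl
  have mul_y_yxz := mulGT y [y,x,z] [x,z] (by rw [CoxeterSystem.wordProd_cons, cs.simple_mul_simple_cancel_left]) len_yxz len_xz rfl
  have mul_y_yzy := mulGT y [y,z,y] [z,y] (by rw [CoxeterSystem.wordProd_cons, cs.simple_mul_simple_cancel_left]) len_yzy len_zy rfl
  have StS5 : HA.b y * (HA.b x * (HA.b z * (HA.b y * (HA.b x * (HA.b z))))) = HA.H (cs.wordProd [y,x,y,z,y,x])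
      + (T 1 : Rv) • HA.H (cs.wordProd [x,y,z,y,x])
      + (T 1 : Rv) • HA.H (cs.wordProd [y,x,y,z,y])
      + (T 1 : Rv) • HA.H (cs.wordProd [y,x,z,y,x])
      + (T 2 : Rv) • HA.H (cs.wordProd [x,y,z,y])
      + (T 2 : Rv) • HA.H (cs.wordProd [x,z,y,x])
      + (T 0 + T 2 : Rv) • HA.H (cs.wordProd [y,x,y,z])
      + (T 2 : Rv) • HA.H (cs.wordProd [y,x,z,y])
      + (T 0 + T 2 : Rv) • HA.H (cs.wordProd [y,z,y,x])
      + (T 1 + T 3 : Rv) • HA.H (cs.wordProd [x,y,z])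
      + (T 3 : Rv) • HA.H (cs.wordProd [x,z,y])
      + (T 1 + T 3 : Rv) • HA.H (cs.wordProd [y,x,y])
      + (T (-1) + (3 : Rv) * T 1 + T 3 : Rv) • HA.H (cs.wordProd [y,x,z])
      + (T 1 + T 3 : Rv) • HA.H (cs.wordProd [y,z,y])
      + (T 1 + T 3 : Rv) • HA.H (cs.wordProd [z,y,x])
      + (T 2 + T 4 : Rv) • HA.H (cs.wordProd [x,y])
      + (T 0 + (3 : Rv) * T 2 + T 4 : Rv) • HA.H (cs.wordProd [x,z])
      + (T 0 + (3 : Rv) * T 2 + T 4 : Rv) • HA.H (cs.wordProd [y,x])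
      + (T 0 + (3 : Rv) * T 2 + T 4 : Rv) • HA.H (cs.wordProd [y,z])
      + (T 2 + T 4 : Rv) • HA.H (cs.wordProd [z,y])
      + (T 1 + (3 : Rv) * T 3 + T 5 : Rv) • HA.H (cs.wordProd [x])
      + (T 1 + (3 : Rv) * T 3 + T 5 : Rv) • HA.H (cs.wordProd [y])
      + (T 1 + (3 : Rv) * T 3 + T 5 : Rv) • HA.H (cs.wordProd [z])
      + (T 2 + (3 : Rv) * T 4 + T 6 : Rv) • HA.H (cs.wordProd []) := by
    rw [StS4, hb y]
    simp only [add_mul, mul_add, smul_mul_assoc, mul_smul_comm, smul_smul, one_mul, mul_one]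
    rw [mul_y_xyzyx, mul_y_xyzy, mul_y_xzyx, mul_y_yxyz, mul_y_yzyx, mul_y_xyz, mul_y_xzy, mul_y_yxy, mul_y_yxz, mul_y_yzy, mul_y_zyx, mul_y_xy, mul_y_xz, mul_y_yx, mul_y_yz, mul_y_zy, mul_y_x, mul_y_y, mul_y_z, mul_y_nil]
    match_scalars <;> (simp only [mul_sub, sub_mul, mul_add, add_mul, one_mul, mul_one, ← T_add]; try norm_num [T_zero]; try ring1)
  have hc1eq : (HA.b y * (HA.b x * (HA.b y * (HA.b z)))) - (HA.b y * (HA.b z)) = HA.H (cs.wordProd [y,x,y,z])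
      + (T 1 : Rv) • HA.H (cs.wordProd [x,y,z])
      + (T 1 : Rv) • HA.H (cs.wordProd [y,x,y])
      + (T 1 : Rv) • HA.H (cs.wordProd [y,x,z])
      + (T 2 : Rv) • HA.H (cs.wordProd [x,y])
      + (T 2 : Rv) • HA.H (cs.wordProd [x,z])
      + (T 2 : Rv) • HA.H (cs.wordProd [y,x])
      + (T 2 : Rv) • HA.H (cs.wordProd [y,z])
      + (T 3 : Rv) • HA.H (cs.wordProd [x])
      + (T 3 : Rv) • HA.H (cs.wordProd [y])
      + (T 3 : Rv) • HA.H (cs.wordProd [z])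
      + (T 4 : Rv) • HA.H (cs.wordProd []) := by
    rw [StU3, StU1]
    match_scalars <;> (simp only [mul_sub, sub_mul, mul_add, add_mul, one_mul, mul_one, ← T_add]; try norm_num [T_zero]; try ring1)
  have hc2eq : (HA.b y * (HA.b z * (HA.b y * (HA.b x)))) - (HA.b y * (HA.b x)) = HA.H (cs.wordProd [y,z,y,x])
      + (T 1 : Rv) • HA.H (cs.wordProd [y,x,z])
      + (T 1 : Rv) • HA.H (cs.wordProd [y,z,y])
      + (T 1 : Rv) • HA.H (cs.wordProd [z,y,x])
      + (T 2 : Rv) • HA.H (cs.wordProd [x,z])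
      + (T 2 : Rv) • HA.H (cs.wordProd [y,x])
      + (T 2 : Rv) • HA.H (cs.wordProd [y,z])
      + (T 2 : Rv) • HA.H (cs.wordProd [z,y])
      + (T 3 : Rv) • HA.H (cs.wordProd [x])
      + (T 3 : Rv) • HA.H (cs.wordProd [y])
      + (T 3 : Rv) • HA.H (cs.wordProd [z])
      + (T 4 : Rv) • HA.H (cs.wordProd []) := by
    rw [StV3, StV1]
    match_scalars <;> (simp only [mul_sub, sub_mul, mul_add, add_mul, one_mul, mul_one, ← T_add]; try norm_num [T_zero]; try ring1)
  have hc0eq : (HA.b y * (HA.b x * (HA.b z * (HA.b y * (HA.b x * (HA.b z)))))) - ((HA.b y * (HA.b x * (HA.b y * (HA.b z)))) - (HA.b y * (HA.b z))) - ((HA.b y * (HA.b z * (HA.b y * (HA.b x)))) - (HA.b y * (HA.b x))) - ((T 1 + T (-1) : Rv)) • (HA.b y * (HA.b x * (HA.b z))) = HA.H (cs.wordProd [y,x,y,z,y,x])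
      + (T 1 : Rv) • HA.H (cs.wordProd [x,y,z,y,x])
      + (T 1 : Rv) • HA.H (cs.wordProd [y,x,y,z,y])
      + (T 1 : Rv) • HA.H (cs.wordProd [y,x,z,y,x])
      + (T 2 : Rv) • HA.H (cs.wordProd [x,y,z,y])
      + (T 2 : Rv) • HA.H (cs.wordProd [x,z,y,x])
      + (T 2 : Rv) • HA.H (cs.wordProd [y,x,y,z])
      + (T 2 : Rv) • HA.H (cs.wordProd [y,x,z,y])
      + (T 2 : Rv) • HA.H (cs.wordProd [y,z,y,x])
      + (T 3 : Rv) • HA.H (cs.wordProd [x,y,z])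
      + (T 3 : Rv) • HA.H (cs.wordProd [x,z,y])
      + (T 3 : Rv) • HA.H (cs.wordProd [y,x,y])
      + (T 3 : Rv) • HA.H (cs.wordProd [y,x,z])
      + (T 3 : Rv) • HA.H (cs.wordProd [y,z,y])
      + (T 3 : Rv) • HA.H (cs.wordProd [z,y,x])
      + (T 4 : Rv) • HA.H (cs.wordProd [x,y])
      + (T 4 : Rv) • HA.H (cs.wordProd [x,z])
      + (T 4 : Rv) • HA.H (cs.wordProd [y,x])
      + (T 4 : Rv) • HA.H (cs.wordProd [y,z])
      + (T 4 : Rv) • HA.H (cs.wordProd [z,y])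
      + (T 5 : Rv) • HA.H (cs.wordProd [x])
      + (T 5 : Rv) • HA.H (cs.wordProd [y])
      + (T 5 : Rv) • HA.H (cs.wordProd [z])
      + (T 6 : Rv) • HA.H (cs.wordProd []) := by
    rw [StS5, StU3, StU1, StV3, StV1, StS2]
    match_scalars <;> (simp only [mul_sub, sub_mul, mul_add, add_mul, one_mul, mul_one, ← T_add]; try norm_num [T_zero]; try ring1)
  have ne0 : cs.wordProd [x,y,z,y,x] ≠ cs.wordProd [y,x,y,z,y,x] :=
    neW [x,y,z,y,x] [y,x,y,z,y,x] [KLgx,KLgy,KLgz,KLgy,KLgx] [KLgy,KLgx,KLgy,KLgz,KLgy,KLgx] (by simp [fmx,fmy,fmz]) (by simp [fmx,fmy,fmz]) (by decide)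
  have ne1 : cs.wordProd [y,x,y,z,y] ≠ cs.wordProd [y,x,y,z,y,x] :=
    neW [y,x,y,z,y] [y,x,y,z,y,x] [KLgy,KLgx,KLgy,KLgz,KLgy] [KLgy,KLgx,KLgy,KLgz,KLgy,KLgx] (by simp [fmx,fmy,fmz]) (by simp [fmx,fmy,fmz]) (by decide)
  have ne2 : cs.wordProd [y,x,z,y,x] ≠ cs.wordProd [y,x,y,z,y,x] :=
    neW [y,x,z,y,x] [y,x,y,z,y,x] [KLgy,KLgx,KLgz,KLgy,KLgx] [KLgy,KLgx,KLgy,KLgz,KLgy,KLgx] (by simp [fmx,fmy,fmz]) (by simp [fmx,fmy,fmz]) (by decide)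
  have ne3 : cs.wordProd [x,y,z,y] ≠ cs.wordProd [y,x,y,z,y,x] :=
    neW [x,y,z,y] [y,x,y,z,y,x] [KLgx,KLgy,KLgz,KLgy] [KLgy,KLgx,KLgy,KLgz,KLgy,KLgx] (by simp [fmx,fmy,fmz]) (by simp [fmx,fmy,fmz]) (by decide)
  have ne4 : cs.wordProd [x,z,y,x] ≠ cs.wordProd [y,x,y,z,y,x] :=
    neW [x,z,y,x] [y,x,y,z,y,x] [KLgx,KLgz,KLgy,KLgx] [KLgy,KLgx,KLgy,KLgz,KLgy,KLgx] (by simp [fmx,fmy,fmz]) (by simp [fmx,fmy,fmz]) (by decide)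
  have ne5 : cs.wordProd [y,x,y,z] ≠ cs.wordProd [y,x,y,z,y,x] :=
    neW [y,x,y,z] [y,x,y,z,y,x] [KLgy,KLgx,KLgy,KLgz] [KLgy,KLgx,KLgy,KLgz,KLgy,KLgx] (by simp [fmx,fmy,fmz]) (by simp [fmx,fmy,fmz]) (by decide)
  have ne6 : cs.wordProd [y,x,z,y] ≠ cs.wordProd [y,x,y,z,y,x] :=
    neW [y,x,z,y] [y,x,y,z,y,x] [KLgy,KLgx,KLgz,KLgy] [KLgy,KLgx,KLgy,KLgz,KLgy,KLgx] (by simp [fmx,fmy,fmz]) (by simp [fmx,fmy,fmz]) (by decide)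
  have ne7 : cs.wordProd [y,z,y,x] ≠ cs.wordProd [y,x,y,z,y,x] :=
    neW [y,z,y,x] [y,x,y,z,y,x] [KLgy,KLgz,KLgy,KLgx] [KLgy,KLgx,KLgy,KLgz,KLgy,KLgx] (by simp [fmx,fmy,fmz]) (by simp [fmx,fmy,fmz]) (by decide)
  have ne8 : cs.wordProd [x,y,z] ≠ cs.wordProd [y,x,y,z,y,x] :=
    neW [x,y,z] [y,x,y,z,y,x] [KLgx,KLgy,KLgz] [KLgy,KLgx,KLgy,KLgz,KLgy,KLgx] (by simp [fmx,fmy,fmz]) (by simp [fmx,fmy,fmz]) (by decide)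
  have ne9 : cs.wordProd [x,z,y] ≠ cs.wordProd [y,x,y,z,y,x] :=
    neW [x,z,y] [y,x,y,z,y,x] [KLgx,KLgz,KLgy] [KLgy,KLgx,KLgy,KLgz,KLgy,KLgx] (by simp [fmx,fmy,fmz]) (by simp [fmx,fmy,fmz]) (by decide)
  have ne10 : cs.wordProd [y,x,y] ≠ cs.wordProd [y,x,y,z,y,x] :=
    neW [y,x,y] [y,x,y,z,y,x] [KLgy,KLgx,KLgy] [KLgy,KLgx,KLgy,KLgz,KLgy,KLgx] (by simp [fmx,fmy]) (by simp [fmx,fmy,fmz]) (by decide)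
  have ne11 : cs.wordProd [y,x,z] ≠ cs.wordProd [y,x,y,z,y,x] :=
    neW [y,x,z] [y,x,y,z,y,x] [KLgy,KLgx,KLgz] [KLgy,KLgx,KLgy,KLgz,KLgy,KLgx] (by simp [fmx,fmy,fmz]) (by simp [fmx,fmy,fmz]) (by decide)
  have ne12 : cs.wordProd [y,z,y] ≠ cs.wordProd [y,x,y,z,y,x] :=
    neW [y,z,y] [y,x,y,z,y,x] [KLgy,KLgz,KLgy] [KLgy,KLgx,KLgy,KLgz,KLgy,KLgx] (by simp [fmy,fmz]) (by simp [fmx,fmy,fmz]) (by decide)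
  have ne13 : cs.wordProd [z,y,x] ≠ cs.wordProd [y,x,y,z,y,x] :=
    neW [z,y,x] [y,x,y,z,y,x] [KLgz,KLgy,KLgx] [KLgy,KLgx,KLgy,KLgz,KLgy,KLgx] (by simp [fmx,fmy,fmz]) (by simp [fmx,fmy,fmz]) (by decide)
  have ne14 : cs.wordProd [x,y] ≠ cs.wordProd [y,x,y,z,y,x] :=
    neW [x,y] [y,x,y,z,y,x] [KLgx,KLgy] [KLgy,KLgx,KLgy,KLgz,KLgy,KLgx] (by simp [fmx,fmy]) (by simp [fmx,fmy,fmz]) (by decide)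
  have ne15 : cs.wordProd [x,z] ≠ cs.wordProd [y,x,y,z,y,x] :=
    neW [x,z] [y,x,y,z,y,x] [KLgx,KLgz] [KLgy,KLgx,KLgy,KLgz,KLgy,KLgx] (by simp [fmx,fmz]) (by simp [fmx,fmy,fmz]) (by decide)
  have ne16 : cs.wordProd [y,x] ≠ cs.wordProd [y,x,y,z,y,x] :=
    neW [y,x] [y,x,y,z,y,x] [KLgy,KLgx] [KLgy,KLgx,KLgy,KLgz,KLgy,KLgx] (by simp [fmx,fmy]) (by simp [fmx,fmy,fmz]) (by decide)
  have ne17 : cs.wordProd [y,z] ≠ cs.wordProd [y,x,y,z,y,x] :=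
    neW [y,z] [y,x,y,z,y,x] [KLgy,KLgz] [KLgy,KLgx,KLgy,KLgz,KLgy,KLgx] (by simp [fmy,fmz]) (by simp [fmx,fmy,fmz]) (by decide)
  have ne18 : cs.wordProd [z,y] ≠ cs.wordProd [y,x,y,z,y,x] :=
    neW [z,y] [y,x,y,z,y,x] [KLgz,KLgy] [KLgy,KLgx,KLgy,KLgz,KLgy,KLgx] (by simp [fmy,fmz]) (by simp [fmx,fmy,fmz]) (by decide)
  have ne19 : cs.wordProd [x] ≠ cs.wordProd [y,x,y,z,y,x] :=
    neW [x] [y,x,y,z,y,x] [KLgx] [KLgy,KLgx,KLgy,KLgz,KLgy,KLgx] (by simp [fmx]) (by simp [fmx,fmy,fmz]) (by decide)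
  have ne20 : cs.wordProd [y] ≠ cs.wordProd [y,x,y,z,y,x] :=
    neW [y] [y,x,y,z,y,x] [KLgy] [KLgy,KLgx,KLgy,KLgz,KLgy,KLgx] (by simp [fmy]) (by simp [fmx,fmy,fmz]) (by decide)
  have ne21 : cs.wordProd [z] ≠ cs.wordProd [y,x,y,z,y,x] :=
    neW [z] [y,x,y,z,y,x] [KLgz] [KLgy,KLgx,KLgy,KLgz,KLgy,KLgx] (by simp [fmz]) (by simp [fmx,fmy,fmz]) (by decide)
  have ne22 : cs.wordProd [] ≠ cs.wordProd [y,x,y,z,y,x] :=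
    neW [] [y,x,y,z,y,x] [] [KLgy,KLgx,KLgy,KLgz,KLgy,KLgx] (by simp) (by simp [fmx,fmy,fmz]) (by decide)
  have hbar0 : HA.bar (HA.H (cs.wordProd [y,x,y,z,y,x])
      + (T 1 : Rv) • HA.H (cs.wordProd [x,y,z,y,x])
      + (T 1 : Rv) • HA.H (cs.wordProd [y,x,y,z,y])
      + (T 1 : Rv) • HA.H (cs.wordProd [y,x,z,y,x])
      + (T 2 : Rv) • HA.H (cs.wordProd [x,y,z,y])
      + (T 2 : Rv) • HA.H (cs.wordProd [x,z,y,x])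
      + (T 2 : Rv) • HA.H (cs.wordProd [y,x,y,z])
      + (T 2 : Rv) • HA.H (cs.wordProd [y,x,z,y])
      + (T 2 : Rv) • HA.H (cs.wordProd [y,z,y,x])
      + (T 3 : Rv) • HA.H (cs.wordProd [x,y,z])
      + (T 3 : Rv) • HA.H (cs.wordProd [x,z,y])
      + (T 3 : Rv) • HA.H (cs.wordProd [y,x,y])
      + (T 3 : Rv) • HA.H (cs.wordProd [y,x,z])
      + (T 3 : Rv) • HA.H (cs.wordProd [y,z,y])
      + (T 3 : Rv) • HA.H (cs.wordProd [z,y,x])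
      + (T 4 : Rv) • HA.H (cs.wordProd [x,y])
      + (T 4 : Rv) • HA.H (cs.wordProd [x,z])
      + (T 4 : Rv) • HA.H (cs.wordProd [y,x])
      + (T 4 : Rv) • HA.H (cs.wordProd [y,z])
      + (T 4 : Rv) • HA.H (cs.wordProd [z,y])
      + (T 5 : Rv) • HA.H (cs.wordProd [x])
      + (T 5 : Rv) • HA.H (cs.wordProd [y])
      + (T 5 : Rv) • HA.H (cs.wordProd [z])
      + (T 6 : Rv) • HA.H (cs.wordProd [])) = (HA.H (cs.wordProd [y,x,y,z,y,x])
      + (T 1 : Rv) • HA.H (cs.wordProd [x,y,z,y,x])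
      + (T 1 : Rv) • HA.H (cs.wordProd [y,x,y,z,y])
      + (T 1 : Rv) • HA.H (cs.wordProd [y,x,z,y,x])
      + (T 2 : Rv) • HA.H (cs.wordProd [x,y,z,y])
      + (T 2 : Rv) • HA.H (cs.wordProd [x,z,y,x])
      + (T 2 : Rv) • HA.H (cs.wordProd [y,x,y,z])
      + (T 2 : Rv) • HA.H (cs.wordProd [y,x,z,y])
      + (T 2 : Rv) • HA.H (cs.wordProd [y,z,y,x])
      + (T 3 : Rv) • HA.H (cs.wordProd [x,y,z])
      + (T 3 : Rv) • HA.H (cs.wordProd [x,z,y])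
      + (T 3 : Rv) • HA.H (cs.wordProd [y,x,y])
      + (T 3 : Rv) • HA.H (cs.wordProd [y,x,z])
      + (T 3 : Rv) • HA.H (cs.wordProd [y,z,y])
      + (T 3 : Rv) • HA.H (cs.wordProd [z,y,x])
      + (T 4 : Rv) • HA.H (cs.wordProd [x,y])
      + (T 4 : Rv) • HA.H (cs.wordProd [x,z])
      + (T 4 : Rv) • HA.H (cs.wordProd [y,x])
      + (T 4 : Rv) • HA.H (cs.wordProd [y,z])
      + (T 4 : Rv) • HA.H (cs.wordProd [z,y])
      + (T 5 : Rv) • HA.H (cs.wordProd [x])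
      + (T 5 : Rv) • HA.H (cs.wordProd [y])
      + (T 5 : Rv) • HA.H (cs.wordProd [z])
      + (T 6 : Rv) • HA.H (cs.wordProd [])) := by
    rw [← hc0eq]
    simp only [map_sub, map_mul, hbarb, HA.bar_smul, map_add,
      LaurentPolynomial.invert_T, neg_neg]
    module
  have hii0 : HA.basisH.repr (HA.H (cs.wordProd [y,x,y,z,y,x])
      + (T 1 : Rv) • HA.H (cs.wordProd [x,y,z,y,x])
      + (T 1 : Rv) • HA.H (cs.wordProd [y,x,y,z,y])
      + (T 1 : Rv) • HA.H (cs.wordProd [y,x,z,y,x])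
      + (T 2 : Rv) • HA.H (cs.wordProd [x,y,z,y])
      + (T 2 : Rv) • HA.H (cs.wordProd [x,z,y,x])
      + (T 2 : Rv) • HA.H (cs.wordProd [y,x,y,z])
      + (T 2 : Rv) • HA.H (cs.wordProd [y,x,z,y])
      + (T 2 : Rv) • HA.H (cs.wordProd [y,z,y,x])
      + (T 3 : Rv) • HA.H (cs.wordProd [x,y,z])
      + (T 3 : Rv) • HA.H (cs.wordProd [x,z,y])
      + (T 3 : Rv) • HA.H (cs.wordProd [y,x,y])
      + (T 3 : Rv) • HA.H (cs.wordProd [y,x,z])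
      + (T 3 : Rv) • HA.H (cs.wordProd [y,z,y])
      + (T 3 : Rv) • HA.H (cs.wordProd [z,y,x])
      + (T 4 : Rv) • HA.H (cs.wordProd [x,y])
      + (T 4 : Rv) • HA.H (cs.wordProd [x,z])
      + (T 4 : Rv) • HA.H (cs.wordProd [y,x])
      + (T 4 : Rv) • HA.H (cs.wordProd [y,z])
      + (T 4 : Rv) • HA.H (cs.wordProd [z,y])
      + (T 5 : Rv) • HA.H (cs.wordProd [x])
      + (T 5 : Rv) • HA.H (cs.wordProd [y])
      + (T 5 : Rv) • HA.H (cs.wordProd [z])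
      + (T 6 : Rv) • HA.H (cs.wordProd [])) (cs.wordProd [y,x,y,z,y,x]) = 1 := by
    simp only [map_add, map_smul, Finsupp.add_apply, Finsupp.smul_apply, hreprH,
      Finsupp.single_eq_same, Finsupp.single_eq_of_ne' ne0, Finsupp.single_eq_of_ne' ne1, Finsupp.single_eq_of_ne' ne2, Finsupp.single_eq_of_ne' ne3, Finsupp.single_eq_of_ne' ne4, Finsupp.single_eq_of_ne' ne5, Finsupp.single_eq_of_ne' ne6, Finsupp.single_eq_of_ne' ne7, Finsupp.single_eq_of_ne' ne8, Finsupp.single_eq_of_ne' ne9, Finsupp.single_eq_of_ne' ne10, Finsupp.single_eq_of_ne' ne11, Finsupp.single_eq_of_ne' ne12, Finsupp.single_eq_of_ne' ne13, Finsupp.single_eq_of_ne' ne14, Finsupp.single_eq_of_ne' ne15, Finsupp.single_eq_of_ne' ne16, Finsupp.single_eq_of_ne' ne17, Finsupp.single_eq_of_ne' ne18, Finsupp.single_eq_of_ne' ne19, Finsupp.single_eq_of_ne' ne20, Finsupp.single_eq_of_ne' ne21, Finsupp.single_eq_of_ne' ne22, smul_zero, add_zero, zero_add]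
  have hiii0 : ∀ u : W, u ≠ cs.wordProd [y,x,y,z,y,x] → ∀ n : ℤ, n ≤ 0 →
      (HA.basisH.repr (HA.H (cs.wordProd [y,x,y,z,y,x])
      + (T 1 : Rv) • HA.H (cs.wordProd [x,y,z,y,x])
      + (T 1 : Rv) • HA.H (cs.wordProd [y,x,y,z,y])
      + (T 1 : Rv) • HA.H (cs.wordProd [y,x,z,y,x])
      + (T 2 : Rv) • HA.H (cs.wordProd [x,y,z,y])
      + (T 2 : Rv) • HA.H (cs.wordProd [x,z,y,x])
      + (T 2 : Rv) • HA.H (cs.wordProd [y,x,y,z])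
      + (T 2 : Rv) • HA.H (cs.wordProd [y,x,z,y])
      + (T 2 : Rv) • HA.H (cs.wordProd [y,z,y,x])
      + (T 3 : Rv) • HA.H (cs.wordProd [x,y,z])
      + (T 3 : Rv) • HA.H (cs.wordProd [x,z,y])
      + (T 3 : Rv) • HA.H (cs.wordProd [y,x,y])
      + (T 3 : Rv) • HA.H (cs.wordProd [y,x,z])
      + (T 3 : Rv) • HA.H (cs.wordProd [y,z,y])
      + (T 3 : Rv) • HA.H (cs.wordProd [z,y,x])
      + (T 4 : Rv) • HA.H (cs.wordProd [x,y])
      + (T 4 : Rv) • HA.H (cs.wordProd [x,z])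
      + (T 4 : Rv) • HA.H (cs.wordProd [y,x])
      + (T 4 : Rv) • HA.H (cs.wordProd [y,z])
      + (T 4 : Rv) • HA.H (cs.wordProd [z,y])
      + (T 5 : Rv) • HA.H (cs.wordProd [x])
      + (T 5 : Rv) • HA.H (cs.wordProd [y])
      + (T 5 : Rv) • HA.H (cs.wordProd [z])
      + (T 6 : Rv) • HA.H (cs.wordProd [])) u).coeff n = 0 := by
    intro u hu n hn
    simp only [map_add, map_smul, Finsupp.add_apply, Finsupp.smul_apply, addap]
    rw [hvan 1 (cs.wordProd [x,y,z,y,x]) u n (by omega),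
      hvan 1 (cs.wordProd [y,x,y,z,y]) u n (by omega),
      hvan 1 (cs.wordProd [y,x,z,y,x]) u n (by omega),
      hvan 2 (cs.wordProd [x,y,z,y]) u n (by omega),
      hvan 2 (cs.wordProd [x,z,y,x]) u n (by omega),
      hvan 2 (cs.wordProd [y,x,y,z]) u n (by omega),
      hvan 2 (cs.wordProd [y,x,z,y]) u n (by omega),
      hvan 2 (cs.wordProd [y,z,y,x]) u n (by omega),
      hvan 3 (cs.wordProd [x,y,z]) u n (by omega),
      hvan 3 (cs.wordProd [x,z,y]) u n (by omega),
      hvan 3 (cs.wordProd [y,x,y]) u n (by omega),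
      hvan 3 (cs.wordProd [y,x,z]) u n (by omega),
      hvan 3 (cs.wordProd [y,z,y]) u n (by omega),
      hvan 3 (cs.wordProd [z,y,x]) u n (by omega),
      hvan 4 (cs.wordProd [x,y]) u n (by omega),
      hvan 4 (cs.wordProd [x,z]) u n (by omega),
      hvan 4 (cs.wordProd [y,x]) u n (by omega),
      hvan 4 (cs.wordProd [y,z]) u n (by omega),
      hvan 4 (cs.wordProd [z,y]) u n (by omega),
      hvan 5 (cs.wordProd [x]) u n (by omega),
      hvan 5 (cs.wordProd [y]) u n (by omega),
      hvan 5 (cs.wordProd [z]) u n (by omega),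
      hvan 6 (cs.wordProd []) u n (by omega),
      hreprH, Finsupp.single_eq_of_ne' (Ne.symm hu)]
    simp
  have hKL0 : HA.IsKL (cs.wordProd [y,x,y,z,y,x]) (HA.H (cs.wordProd [y,x,y,z,y,x])
      + (T 1 : Rv) • HA.H (cs.wordProd [x,y,z,y,x])
      + (T 1 : Rv) • HA.H (cs.wordProd [y,x,y,z,y])
      + (T 1 : Rv) • HA.H (cs.wordProd [y,x,z,y,x])
      + (T 2 : Rv) • HA.H (cs.wordProd [x,y,z,y])
      + (T 2 : Rv) • HA.H (cs.wordProd [x,z,y,x])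
      + (T 2 : Rv) • HA.H (cs.wordProd [y,x,y,z])
      + (T 2 : Rv) • HA.H (cs.wordProd [y,x,z,y])
      + (T 2 : Rv) • HA.H (cs.wordProd [y,z,y,x])
      + (T 3 : Rv) • HA.H (cs.wordProd [x,y,z])
      + (T 3 : Rv) • HA.H (cs.wordProd [x,z,y])
      + (T 3 : Rv) • HA.H (cs.wordProd [y,x,y])
      + (T 3 : Rv) • HA.H (cs.wordProd [y,x,z])
      + (T 3 : Rv) • HA.H (cs.wordProd [y,z,y])
      + (T 3 : Rv) • HA.H (cs.wordProd [z,y,x])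
      + (T 4 : Rv) • HA.H (cs.wordProd [x,y])
      + (T 4 : Rv) • HA.H (cs.wordProd [x,z])
      + (T 4 : Rv) • HA.H (cs.wordProd [y,x])
      + (T 4 : Rv) • HA.H (cs.wordProd [y,z])
      + (T 4 : Rv) • HA.H (cs.wordProd [z,y])
      + (T 5 : Rv) • HA.H (cs.wordProd [x])
      + (T 5 : Rv) • HA.H (cs.wordProd [y])
      + (T 5 : Rv) • HA.H (cs.wordProd [z])
      + (T 6 : Rv) • HA.H (cs.wordProd [])) := ⟨hbar0, hii0, hiii0⟩
  have ne23 : cs.wordProd [x,y,z] ≠ cs.wordProd [y,x,y,z] :=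
    neW [x,y,z] [y,x,y,z] [KLgx,KLgy,KLgz] [KLgy,KLgx,KLgy,KLgz] (by simp [fmx,fmy,fmz]) (by simp [fmx,fmy,fmz]) (by decide)
  have ne24 : cs.wordProd [y,x,y] ≠ cs.wordProd [y,x,y,z] :=
    neW [y,x,y] [y,x,y,z] [KLgy,KLgx,KLgy] [KLgy,KLgx,KLgy,KLgz] (by simp [fmx,fmy]) (by simp [fmx,fmy,fmz]) (by decide)
  have ne25 : cs.wordProd [y,x,z] ≠ cs.wordProd [y,x,y,z] :=
    neW [y,x,z] [y,x,y,z] [KLgy,KLgx,KLgz] [KLgy,KLgx,KLgy,KLgz] (by simp [fmx,fmy,fmz]) (by simp [fmx,fmy,fmz]) (by decide)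
  have ne26 : cs.wordProd [x,y] ≠ cs.wordProd [y,x,y,z] :=
    neW [x,y] [y,x,y,z] [KLgx,KLgy] [KLgy,KLgx,KLgy,KLgz] (by simp [fmx,fmy]) (by simp [fmx,fmy,fmz]) (by decide)
  have ne27 : cs.wordProd [x,z] ≠ cs.wordProd [y,x,y,z] :=
    neW [x,z] [y,x,y,z] [KLgx,KLgz] [KLgy,KLgx,KLgy,KLgz] (by simp [fmx,fmz]) (by simp [fmx,fmy,fmz]) (by decide)
  have ne28 : cs.wordProd [y,x] ≠ cs.wordProd [y,x,y,z] :=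
    neW [y,x] [y,x,y,z] [KLgy,KLgx] [KLgy,KLgx,KLgy,KLgz] (by simp [fmx,fmy]) (by simp [fmx,fmy,fmz]) (by decide)
  have ne29 : cs.wordProd [y,z] ≠ cs.wordProd [y,x,y,z] :=
    neW [y,z] [y,x,y,z] [KLgy,KLgz] [KLgy,KLgx,KLgy,KLgz] (by simp [fmy,fmz]) (by simp [fmx,fmy,fmz]) (by decide)
  have ne30 : cs.wordProd [x] ≠ cs.wordProd [y,x,y,z] :=
    neW [x] [y,x,y,z] [KLgx] [KLgy,KLgx,KLgy,KLgz] (by simp [fmx]) (by simp [fmx,fmy,fmz]) (by decide)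
  have ne31 : cs.wordProd [y] ≠ cs.wordProd [y,x,y,z] :=
    neW [y] [y,x,y,z] [KLgy] [KLgy,KLgx,KLgy,KLgz] (by simp [fmy]) (by simp [fmx,fmy,fmz]) (by decide)
  have ne32 : cs.wordProd [z] ≠ cs.wordProd [y,x,y,z] :=
    neW [z] [y,x,y,z] [KLgz] [KLgy,KLgx,KLgy,KLgz] (by simp [fmz]) (by simp [fmx,fmy,fmz]) (by decide)
  have ne33 : cs.wordProd [] ≠ cs.wordProd [y,x,y,z] :=
    neW [] [y,x,y,z] [] [KLgy,KLgx,KLgy,KLgz] (by simp) (by simp [fmx,fmy,fmz]) (by decide)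
  have hbar1 : HA.bar (HA.H (cs.wordProd [y,x,y,z])
      + (T 1 : Rv) • HA.H (cs.wordProd [x,y,z])
      + (T 1 : Rv) • HA.H (cs.wordProd [y,x,y])
      + (T 1 : Rv) • HA.H (cs.wordProd [y,x,z])
      + (T 2 : Rv) • HA.H (cs.wordProd [x,y])
      + (T 2 : Rv) • HA.H (cs.wordProd [x,z])
      + (T 2 : Rv) • HA.H (cs.wordProd [y,x])
      + (T 2 : Rv) • HA.H (cs.wordProd [y,z])
      + (T 3 : Rv) • HA.H (cs.wordProd [x])
      + (T 3 : Rv) • HA.H (cs.wordProd [y])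
      + (T 3 : Rv) • HA.H (cs.wordProd [z])
      + (T 4 : Rv) • HA.H (cs.wordProd [])) = (HA.H (cs.wordProd [y,x,y,z])
      + (T 1 : Rv) • HA.H (cs.wordProd [x,y,z])
      + (T 1 : Rv) • HA.H (cs.wordProd [y,x,y])
      + (T 1 : Rv) • HA.H (cs.wordProd [y,x,z])
      + (T 2 : Rv) • HA.H (cs.wordProd [x,y])
      + (T 2 : Rv) • HA.H (cs.wordProd [x,z])
      + (T 2 : Rv) • HA.H (cs.wordProd [y,x])
      + (T 2 : Rv) • HA.H (cs.wordProd [y,z])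
      + (T 3 : Rv) • HA.H (cs.wordProd [x])
      + (T 3 : Rv) • HA.H (cs.wordProd [y])
      + (T 3 : Rv) • HA.H (cs.wordProd [z])
      + (T 4 : Rv) • HA.H (cs.wordProd [])) := by
    rw [← hc1eq]
    simp only [map_sub, map_mul, hbarb]
  have hii1 : HA.basisH.repr (HA.H (cs.wordProd [y,x,y,z])
      + (T 1 : Rv) • HA.H (cs.wordProd [x,y,z])
      + (T 1 : Rv) • HA.H (cs.wordProd [y,x,y])
      + (T 1 : Rv) • HA.H (cs.wordProd [y,x,z])
      + (T 2 : Rv) • HA.H (cs.wordProd [x,y])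
      + (T 2 : Rv) • HA.H (cs.wordProd [x,z])
      + (T 2 : Rv) • HA.H (cs.wordProd [y,x])
      + (T 2 : Rv) • HA.H (cs.wordProd [y,z])
      + (T 3 : Rv) • HA.H (cs.wordProd [x])
      + (T 3 : Rv) • HA.H (cs.wordProd [y])
      + (T 3 : Rv) • HA.H (cs.wordProd [z])
      + (T 4 : Rv) • HA.H (cs.wordProd [])) (cs.wordProd [y,x,y,z]) = 1 := by
    simp only [map_add, map_smul, Finsupp.add_apply, Finsupp.smul_apply, hreprH,
      Finsupp.single_eq_same, Finsupp.single_eq_of_ne' ne23, Finsupp.single_eq_of_ne' ne24, Finsupp.single_eq_of_ne' ne25, Finsupp.single_eq_of_ne' ne26, Finsupp.single_eq_of_ne' ne27, Finsupp.single_eq_of_ne' ne28, Finsupp.single_eq_of_ne' ne29, Finsupp.single_eq_of_ne' ne30, Finsupp.single_eq_of_ne' ne31, Finsupp.single_eq_of_ne' ne32, Finsupp.single_eq_of_ne' ne33, smul_zero, add_zero, zero_add]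
  have hiii1 : ∀ u : W, u ≠ cs.wordProd [y,x,y,z] → ∀ n : ℤ, n ≤ 0 →
      (HA.basisH.repr (HA.H (cs.wordProd [y,x,y,z])
      + (T 1 : Rv) • HA.H (cs.wordProd [x,y,z])
      + (T 1 : Rv) • HA.H (cs.wordProd [y,x,y])
      + (T 1 : Rv) • HA.H (cs.wordProd [y,x,z])
      + (T 2 : Rv) • HA.H (cs.wordProd [x,y])
      + (T 2 : Rv) • HA.H (cs.wordProd [x,z])
      + (T 2 : Rv) • HA.H (cs.wordProd [y,x])
      + (T 2 : Rv) • HA.H (cs.wordProd [y,z])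
      + (T 3 : Rv) • HA.H (cs.wordProd [x])
      + (T 3 : Rv) • HA.H (cs.wordProd [y])
      + (T 3 : Rv) • HA.H (cs.wordProd [z])
      + (T 4 : Rv) • HA.H (cs.wordProd [])) u).coeff n = 0 := by
    intro u hu n hn
    simp only [map_add, map_smul, Finsupp.add_apply, Finsupp.smul_apply, addap]
    rw [hvan 1 (cs.wordProd [x,y,z]) u n (by omega),
      hvan 1 (cs.wordProd [y,x,y]) u n (by omega),
      hvan 1 (cs.wordProd [y,x,z]) u n (by omega),
      hvan 2 (cs.wordProd [x,y]) u n (by omega),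
      hvan 2 (cs.wordProd [x,z]) u n (by omega),
      hvan 2 (cs.wordProd [y,x]) u n (by omega),
      hvan 2 (cs.wordProd [y,z]) u n (by omega),
      hvan 3 (cs.wordProd [x]) u n (by omega),
      hvan 3 (cs.wordProd [y]) u n (by omega),
      hvan 3 (cs.wordProd [z]) u n (by omega),
      hvan 4 (cs.wordProd []) u n (by omega),
      hreprH, Finsupp.single_eq_of_ne' (Ne.symm hu)]
    simp
  have hKL1 : HA.IsKL (cs.wordProd [y,x,y,z]) (HA.H (cs.wordProd [y,x,y,z])
      + (T 1 : Rv) • HA.H (cs.wordProd [x,y,z])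
      + (T 1 : Rv) • HA.H (cs.wordProd [y,x,y])
      + (T 1 : Rv) • HA.H (cs.wordProd [y,x,z])
      + (T 2 : Rv) • HA.H (cs.wordProd [x,y])
      + (T 2 : Rv) • HA.H (cs.wordProd [x,z])
      + (T 2 : Rv) • HA.H (cs.wordProd [y,x])
      + (T 2 : Rv) • HA.H (cs.wordProd [y,z])
      + (T 3 : Rv) • HA.H (cs.wordProd [x])
      + (T 3 : Rv) • HA.H (cs.wordProd [y])
      + (T 3 : Rv) • HA.H (cs.wordProd [z])
      + (T 4 : Rv) • HA.H (cs.wordProd [])) := ⟨hbar1, hii1, hiii1⟩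
  have ne34 : cs.wordProd [y,x,z] ≠ cs.wordProd [y,z,y,x] :=
    neW [y,x,z] [y,z,y,x] [KLgy,KLgx,KLgz] [KLgy,KLgz,KLgy,KLgx] (by simp [fmx,fmy,fmz]) (by simp [fmx,fmy,fmz]) (by decide)
  have ne35 : cs.wordProd [y,z,y] ≠ cs.wordProd [y,z,y,x] :=
    neW [y,z,y] [y,z,y,x] [KLgy,KLgz,KLgy] [KLgy,KLgz,KLgy,KLgx] (by simp [fmy,fmz]) (by simp [fmx,fmy,fmz]) (by decide)
  have ne36 : cs.wordProd [z,y,x] ≠ cs.wordProd [y,z,y,x] :=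
    neW [z,y,x] [y,z,y,x] [KLgz,KLgy,KLgx] [KLgy,KLgz,KLgy,KLgx] (by simp [fmx,fmy,fmz]) (by simp [fmx,fmy,fmz]) (by decide)
  have ne37 : cs.wordProd [x,z] ≠ cs.wordProd [y,z,y,x] :=
    neW [x,z] [y,z,y,x] [KLgx,KLgz] [KLgy,KLgz,KLgy,KLgx] (by simp [fmx,fmz]) (by simp [fmx,fmy,fmz]) (by decide)
  have ne38 : cs.wordProd [y,x] ≠ cs.wordProd [y,z,y,x] :=
    neW [y,x] [y,z,y,x] [KLgy,KLgx] [KLgy,KLgz,KLgy,KLgx] (by simp [fmx,fmy]) (by simp [fmx,fmy,fmz]) (by decide)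
  have ne39 : cs.wordProd [y,z] ≠ cs.wordProd [y,z,y,x] :=
    neW [y,z] [y,z,y,x] [KLgy,KLgz] [KLgy,KLgz,KLgy,KLgx] (by simp [fmy,fmz]) (by simp [fmx,fmy,fmz]) (by decide)
  have ne40 : cs.wordProd [z,y] ≠ cs.wordProd [y,z,y,x] :=
    neW [z,y] [y,z,y,x] [KLgz,KLgy] [KLgy,KLgz,KLgy,KLgx] (by simp [fmy,fmz]) (by simp [fmx,fmy,fmz]) (by decide)
  have ne41 : cs.wordProd [x] ≠ cs.wordProd [y,z,y,x] :=
    neW [x] [y,z,y,x] [KLgx] [KLgy,KLgz,KLgy,KLgx] (by simp [fmx]) (by simp [fmx,fmy,fmz]) (by decide)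
  have ne42 : cs.wordProd [y] ≠ cs.wordProd [y,z,y,x] :=
    neW [y] [y,z,y,x] [KLgy] [KLgy,KLgz,KLgy,KLgx] (by simp [fmy]) (by simp [fmx,fmy,fmz]) (by decide)
  have ne43 : cs.wordProd [z] ≠ cs.wordProd [y,z,y,x] :=
    neW [z] [y,z,y,x] [KLgz] [KLgy,KLgz,KLgy,KLgx] (by simp [fmz]) (by simp [fmx,fmy,fmz]) (by decide)
  have ne44 : cs.wordProd [] ≠ cs.wordProd [y,z,y,x] :=
    neW [] [y,z,y,x] [] [KLgy,KLgz,KLgy,KLgx] (by simp) (by simp [fmx,fmy,fmz]) (by decide)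
  have hbar2 : HA.bar (HA.H (cs.wordProd [y,z,y,x])
      + (T 1 : Rv) • HA.H (cs.wordProd [y,x,z])
      + (T 1 : Rv) • HA.H (cs.wordProd [y,z,y])
      + (T 1 : Rv) • HA.H (cs.wordProd [z,y,x])
      + (T 2 : Rv) • HA.H (cs.wordProd [x,z])
      + (T 2 : Rv) • HA.H (cs.wordProd [y,x])
      + (T 2 : Rv) • HA.H (cs.wordProd [y,z])
      + (T 2 : Rv) • HA.H (cs.wordProd [z,y])
      + (T 3 : Rv) • HA.H (cs.wordProd [x])
      + (T 3 : Rv) • HA.H (cs.wordProd [y])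
      + (T 3 : Rv) • HA.H (cs.wordProd [z])
      + (T 4 : Rv) • HA.H (cs.wordProd [])) = (HA.H (cs.wordProd [y,z,y,x])
      + (T 1 : Rv) • HA.H (cs.wordProd [y,x,z])
      + (T 1 : Rv) • HA.H (cs.wordProd [y,z,y])
      + (T 1 : Rv) • HA.H (cs.wordProd [z,y,x])
      + (T 2 : Rv) • HA.H (cs.wordProd [x,z])
      + (T 2 : Rv) • HA.H (cs.wordProd [y,x])
      + (T 2 : Rv) • HA.H (cs.wordProd [y,z])
      + (T 2 : Rv) • HA.H (cs.wordProd [z,y])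
      + (T 3 : Rv) • HA.H (cs.wordProd [x])
      + (T 3 : Rv) • HA.H (cs.wordProd [y])
      + (T 3 : Rv) • HA.H (cs.wordProd [z])
      + (T 4 : Rv) • HA.H (cs.wordProd [])) := by
    rw [← hc2eq]
    simp only [map_sub, map_mul, hbarb]
  have hii2 : HA.basisH.repr (HA.H (cs.wordProd [y,z,y,x])
      + (T 1 : Rv) • HA.H (cs.wordProd [y,x,z])
      + (T 1 : Rv) • HA.H (cs.wordProd [y,z,y])
      + (T 1 : Rv) • HA.H (cs.wordProd [z,y,x])
      + (T 2 : Rv) • HA.H (cs.wordProd [x,z])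
      + (T 2 : Rv) • HA.H (cs.wordProd [y,x])
      + (T 2 : Rv) • HA.H (cs.wordProd [y,z])
      + (T 2 : Rv) • HA.H (cs.wordProd [z,y])
      + (T 3 : Rv) • HA.H (cs.wordProd [x])
      + (T 3 : Rv) • HA.H (cs.wordProd [y])
      + (T 3 : Rv) • HA.H (cs.wordProd [z])
      + (T 4 : Rv) • HA.H (cs.wordProd [])) (cs.wordProd [y,z,y,x]) = 1 := by
    simp only [map_add, map_smul, Finsupp.add_apply, Finsupp.smul_apply, hreprH,
      Finsupp.single_eq_same, Finsupp.single_eq_of_ne' ne34, Finsupp.single_eq_of_ne' ne35, Finsupp.single_eq_of_ne' ne36, Finsupp.single_eq_of_ne' ne37, Finsupp.single_eq_of_ne' ne38, Finsupp.single_eq_of_ne' ne39, Finsupp.single_eq_of_ne' ne40, Finsupp.single_eq_of_ne' ne41, Finsupp.single_eq_of_ne' ne42, Finsupp.single_eq_of_ne' ne43, Finsupp.single_eq_of_ne' ne44, smul_zero, add_zero, zero_add]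
  have hiii2 : ∀ u : W, u ≠ cs.wordProd [y,z,y,x] → ∀ n : ℤ, n ≤ 0 →
      (HA.basisH.repr (HA.H (cs.wordProd [y,z,y,x])
      + (T 1 : Rv) • HA.H (cs.wordProd [y,x,z])
      + (T 1 : Rv) • HA.H (cs.wordProd [y,z,y])
      + (T 1 : Rv) • HA.H (cs.wordProd [z,y,x])
      + (T 2 : Rv) • HA.H (cs.wordProd [x,z])
      + (T 2 : Rv) • HA.H (cs.wordProd [y,x])
      + (T 2 : Rv) • HA.H (cs.wordProd [y,z])
      + (T 2 : Rv) • HA.H (cs.wordProd [z,y])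
      + (T 3 : Rv) • HA.H (cs.wordProd [x])
      + (T 3 : Rv) • HA.H (cs.wordProd [y])
      + (T 3 : Rv) • HA.H (cs.wordProd [z])
      + (T 4 : Rv) • HA.H (cs.wordProd [])) u).coeff n = 0 := by
    intro u hu n hn
    simp only [map_add, map_smul, Finsupp.add_apply, Finsupp.smul_apply, addap]
    rw [hvan 1 (cs.wordProd [y,x,z]) u n (by omega),
      hvan 1 (cs.wordProd [y,z,y]) u n (by omega),
      hvan 1 (cs.wordProd [z,y,x]) u n (by omega),
      hvan 2 (cs.wordProd [x,z]) u n (by omega),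
      hvan 2 (cs.wordProd [y,x]) u n (by omega),
      hvan 2 (cs.wordProd [y,z]) u n (by omega),
      hvan 2 (cs.wordProd [z,y]) u n (by omega),
      hvan 3 (cs.wordProd [x]) u n (by omega),
      hvan 3 (cs.wordProd [y]) u n (by omega),
      hvan 3 (cs.wordProd [z]) u n (by omega),
      hvan 4 (cs.wordProd []) u n (by omega),
      hreprH, Finsupp.single_eq_of_ne' (Ne.symm hu)]
    simp
  have hKL2 : HA.IsKL (cs.wordProd [y,z,y,x]) (HA.H (cs.wordProd [y,z,y,x])
      + (T 1 : Rv) • HA.H (cs.wordProd [y,x,z])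
      + (T 1 : Rv) • HA.H (cs.wordProd [y,z,y])
      + (T 1 : Rv) • HA.H (cs.wordProd [z,y,x])
      + (T 2 : Rv) • HA.H (cs.wordProd [x,z])
      + (T 2 : Rv) • HA.H (cs.wordProd [y,x])
      + (T 2 : Rv) • HA.H (cs.wordProd [y,z])
      + (T 2 : Rv) • HA.H (cs.wordProd [z,y])
      + (T 3 : Rv) • HA.H (cs.wordProd [x])
      + (T 3 : Rv) • HA.H (cs.wordProd [y])
      + (T 3 : Rv) • HA.H (cs.wordProd [z])
      + (T 4 : Rv) • HA.H (cs.wordProd [])) := ⟨hbar2, hii2, hiii2⟩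
  have ne45 : cs.wordProd [x,z] ≠ cs.wordProd [y,x,z] :=
    neW [x,z] [y,x,z] [KLgx,KLgz] [KLgy,KLgx,KLgz] (by simp [fmx,fmz]) (by simp [fmx,fmy,fmz]) (by decide)
  have ne46 : cs.wordProd [y,x] ≠ cs.wordProd [y,x,z] :=
    neW [y,x] [y,x,z] [KLgy,KLgx] [KLgy,KLgx,KLgz] (by simp [fmx,fmy]) (by simp [fmx,fmy,fmz]) (by decide)
  have ne47 : cs.wordProd [y,z] ≠ cs.wordProd [y,x,z] :=
    neW [y,z] [y,x,z] [KLgy,KLgz] [KLgy,KLgx,KLgz] (by simp [fmy,fmz]) (by simp [fmx,fmy,fmz]) (by decide)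
  have ne48 : cs.wordProd [x] ≠ cs.wordProd [y,x,z] :=
    neW [x] [y,x,z] [KLgx] [KLgy,KLgx,KLgz] (by simp [fmx]) (by simp [fmx,fmy,fmz]) (by decide)
  have ne49 : cs.wordProd [y] ≠ cs.wordProd [y,x,z] :=
    neW [y] [y,x,z] [KLgy] [KLgy,KLgx,KLgz] (by simp [fmy]) (by simp [fmx,fmy,fmz]) (by decide)
  have ne50 : cs.wordProd [z] ≠ cs.wordProd [y,x,z] :=
    neW [z] [y,x,z] [KLgz] [KLgy,KLgx,KLgz] (by simp [fmz]) (by simp [fmx,fmy,fmz]) (by decide)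
  have ne51 : cs.wordProd [] ≠ cs.wordProd [y,x,z] :=
    neW [] [y,x,z] [] [KLgy,KLgx,KLgz] (by simp) (by simp [fmx,fmy,fmz]) (by decide)
  have hbar3 : HA.bar (HA.H (cs.wordProd [y,x,z])
      + (T 1 : Rv) • HA.H (cs.wordProd [x,z])
      + (T 1 : Rv) • HA.H (cs.wordProd [y,x])
      + (T 1 : Rv) • HA.H (cs.wordProd [y,z])
      + (T 2 : Rv) • HA.H (cs.wordProd [x])
      + (T 2 : Rv) • HA.H (cs.wordProd [y])
      + (T 2 : Rv) • HA.H (cs.wordProd [z])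
      + (T 3 : Rv) • HA.H (cs.wordProd [])) = (HA.H (cs.wordProd [y,x,z])
      + (T 1 : Rv) • HA.H (cs.wordProd [x,z])
      + (T 1 : Rv) • HA.H (cs.wordProd [y,x])
      + (T 1 : Rv) • HA.H (cs.wordProd [y,z])
      + (T 2 : Rv) • HA.H (cs.wordProd [x])
      + (T 2 : Rv) • HA.H (cs.wordProd [y])
      + (T 2 : Rv) • HA.H (cs.wordProd [z])
      + (T 3 : Rv) • HA.H (cs.wordProd [])) := by
    rw [← StS2]
    simp only [map_mul, hbarb]
  have hii3 : HA.basisH.repr (HA.H (cs.wordProd [y,x,z])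
      + (T 1 : Rv) • HA.H (cs.wordProd [x,z])
      + (T 1 : Rv) • HA.H (cs.wordProd [y,x])
      + (T 1 : Rv) • HA.H (cs.wordProd [y,z])
      + (T 2 : Rv) • HA.H (cs.wordProd [x])
      + (T 2 : Rv) • HA.H (cs.wordProd [y])
      + (T 2 : Rv) • HA.H (cs.wordProd [z])
      + (T 3 : Rv) • HA.H (cs.wordProd [])) (cs.wordProd [y,x,z]) = 1 := by
    simp only [map_add, map_smul, Finsupp.add_apply, Finsupp.smul_apply, hreprH,
      Finsupp.single_eq_same, Finsupp.single_eq_of_ne' ne45, Finsupp.single_eq_of_ne' ne46, Finsupp.single_eq_of_ne' ne47, Finsupp.single_eq_of_ne' ne48, Finsupp.single_eq_of_ne' ne49, Finsupp.single_eq_of_ne' ne50, Finsupp.single_eq_of_ne' ne51, smul_zero, add_zero, zero_add]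
  have hiii3 : ∀ u : W, u ≠ cs.wordProd [y,x,z] → ∀ n : ℤ, n ≤ 0 →
      (HA.basisH.repr (HA.H (cs.wordProd [y,x,z])
      + (T 1 : Rv) • HA.H (cs.wordProd [x,z])
      + (T 1 : Rv) • HA.H (cs.wordProd [y,x])
      + (T 1 : Rv) • HA.H (cs.wordProd [y,z])
      + (T 2 : Rv) • HA.H (cs.wordProd [x])
      + (T 2 : Rv) • HA.H (cs.wordProd [y])
      + (T 2 : Rv) • HA.H (cs.wordProd [z])
      + (T 3 : Rv) • HA.H (cs.wordProd [])) u).coeff n = 0 := by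
    intro u hu n hn
    simp only [map_add, map_smul, Finsupp.add_apply, Finsupp.smul_apply, addap]
    rw [hvan 1 (cs.wordProd [x,z]) u n (by omega),
      hvan 1 (cs.wordProd [y,x]) u n (by omega),
      hvan 1 (cs.wordProd [y,z]) u n (by omega),
      hvan 2 (cs.wordProd [x]) u n (by omega),
      hvan 2 (cs.wordProd [y]) u n (by omega),
      hvan 2 (cs.wordProd [z]) u n (by omega),
      hvan 3 (cs.wordProd []) u n (by omega),
      hreprH, Finsupp.single_eq_of_ne' (Ne.symm hu)]
    simp
  have hKL3 : HA.IsKL (cs.wordProd [y,x,z]) (HA.H (cs.wordProd [y,x,z])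
      + (T 1 : Rv) • HA.H (cs.wordProd [x,z])
      + (T 1 : Rv) • HA.H (cs.wordProd [y,x])
      + (T 1 : Rv) • HA.H (cs.wordProd [y,z])
      + (T 2 : Rv) • HA.H (cs.wordProd [x])
      + (T 2 : Rv) • HA.H (cs.wordProd [y])
      + (T 2 : Rv) • HA.H (cs.wordProd [z])
      + (T 3 : Rv) • HA.H (cs.wordProd [])) := ⟨hbar3, hii3, hiii3⟩
  have hw0 : cs.wordProd [y,x,y,z,y,x] = cs.simple y * cs.simple x * cs.simple z * cs.simple y * cs.simple x * cs.simple z := by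
    simp only [CoxeterSystem.wordProd_cons, CoxeterSystem.wordProd_nil, mul_one, mul_assoc]
    rw [gidzyxz]
  have hw1 : cs.wordProd [y,x,y,z] = cs.simple y * cs.simple x * cs.simple y * cs.simple z := by
    simp only [CoxeterSystem.wordProd_cons, CoxeterSystem.wordProd_nil, mul_one, mul_assoc]
  have hw2 : cs.wordProd [y,z,y,x] = cs.simple y * cs.simple z * cs.simple y * cs.simple x := by
    simp only [CoxeterSystem.wordProd_cons, CoxeterSystem.wordProd_nil, mul_one, mul_assoc]
  have hw3 : cs.wordProd [y,x,z] = cs.simple y * cs.simple x * cs.simple z := by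
    simp only [CoxeterSystem.wordProd_cons, CoxeterSystem.wordProd_nil, mul_one, mul_assoc]
  have e0 : b₀ = HA.H (cs.wordProd [y,x,y,z,y,x])
      + (T 1 : Rv) • HA.H (cs.wordProd [x,y,z,y,x])
      + (T 1 : Rv) • HA.H (cs.wordProd [y,x,y,z,y])
      + (T 1 : Rv) • HA.H (cs.wordProd [y,x,z,y,x])
      + (T 2 : Rv) • HA.H (cs.wordProd [x,y,z,y])
      + (T 2 : Rv) • HA.H (cs.wordProd [x,z,y,x])
      + (T 2 : Rv) • HA.H (cs.wordProd [y,x,y,z])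
      + (T 2 : Rv) • HA.H (cs.wordProd [y,x,z,y])
      + (T 2 : Rv) • HA.H (cs.wordProd [y,z,y,x])
      + (T 3 : Rv) • HA.H (cs.wordProd [x,y,z])
      + (T 3 : Rv) • HA.H (cs.wordProd [x,z,y])
      + (T 3 : Rv) • HA.H (cs.wordProd [y,x,y])
      + (T 3 : Rv) • HA.H (cs.wordProd [y,x,z])
      + (T 3 : Rv) • HA.H (cs.wordProd [y,z,y])
      + (T 3 : Rv) • HA.H (cs.wordProd [z,y,x])
      + (T 4 : Rv) • HA.H (cs.wordProd [x,y])
      + (T 4 : Rv) • HA.H (cs.wordProd [x,z])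
      + (T 4 : Rv) • HA.H (cs.wordProd [y,x])
      + (T 4 : Rv) • HA.H (cs.wordProd [y,z])
      + (T 4 : Rv) • HA.H (cs.wordProd [z,y])
      + (T 5 : Rv) • HA.H (cs.wordProd [x])
      + (T 5 : Rv) • HA.H (cs.wordProd [y])
      + (T 5 : Rv) • HA.H (cs.wordProd [z])
      + (T 6 : Rv) • HA.H (cs.wordProd []) :=
    HA.IsKL_unique (by rw [hw0]; exact hb₀) hKL0
  have e1 : b₁ = HA.H (cs.wordProd [y,x,y,z])
      + (T 1 : Rv) • HA.H (cs.wordProd [x,y,z])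
      + (T 1 : Rv) • HA.H (cs.wordProd [y,x,y])
      + (T 1 : Rv) • HA.H (cs.wordProd [y,x,z])
      + (T 2 : Rv) • HA.H (cs.wordProd [x,y])
      + (T 2 : Rv) • HA.H (cs.wordProd [x,z])
      + (T 2 : Rv) • HA.H (cs.wordProd [y,x])
      + (T 2 : Rv) • HA.H (cs.wordProd [y,z])
      + (T 3 : Rv) • HA.H (cs.wordProd [x])
      + (T 3 : Rv) • HA.H (cs.wordProd [y])
      + (T 3 : Rv) • HA.H (cs.wordProd [z])
      + (T 4 : Rv) • HA.H (cs.wordProd []) :=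
    HA.IsKL_unique (by rw [hw1]; exact hb₁) hKL1
  have e2 : b₂ = HA.H (cs.wordProd [y,z,y,x])
      + (T 1 : Rv) • HA.H (cs.wordProd [y,x,z])
      + (T 1 : Rv) • HA.H (cs.wordProd [y,z,y])
      + (T 1 : Rv) • HA.H (cs.wordProd [z,y,x])
      + (T 2 : Rv) • HA.H (cs.wordProd [x,z])
      + (T 2 : Rv) • HA.H (cs.wordProd [y,x])
      + (T 2 : Rv) • HA.H (cs.wordProd [y,z])
      + (T 2 : Rv) • HA.H (cs.wordProd [z,y])
      + (T 3 : Rv) • HA.H (cs.wordProd [x])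
      + (T 3 : Rv) • HA.H (cs.wordProd [y])
      + (T 3 : Rv) • HA.H (cs.wordProd [z])
      + (T 4 : Rv) • HA.H (cs.wordProd []) :=
    HA.IsKL_unique (by rw [hw2]; exact hb₂) hKL2
  have e3 : b₃ = HA.H (cs.wordProd [y,x,z])
      + (T 1 : Rv) • HA.H (cs.wordProd [x,z])
      + (T 1 : Rv) • HA.H (cs.wordProd [y,x])
      + (T 1 : Rv) • HA.H (cs.wordProd [y,z])
      + (T 2 : Rv) • HA.H (cs.wordProd [x])
      + (T 2 : Rv) • HA.H (cs.wordProd [y])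
      + (T 2 : Rv) • HA.H (cs.wordProd [z])
      + (T 3 : Rv) • HA.H (cs.wordProd []) :=
    HA.IsKL_unique (by rw [hw3]; exact hb₃) hKL3
  rw [e0, e1, e2, e3]
  have hassoc : HA.b y * (HA.b x * HA.b z) * HA.b y * (HA.b x * HA.b z) = HA.b y * (HA.b x * (HA.b z * (HA.b y * (HA.b x * (HA.b z))))) := by
    simp only [mul_assoc]
  rw [hassoc, StS5]
  match_scalars <;> (simp only [mul_sub, sub_mul, mul_add, add_mul, one_mul, mul_one, ← T_add]; try norm_num [T_zero]; try ring1)
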